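/- arXiv:math/0306036 — 6 statements merged into one kernel-verified Lean document; each statement's English description precedes it below -/
import Mathlib

section
/- The logarithm of z/(e^z - 1) as a formal power series equals the sum over j ≥ 1 of (-1)^{j-1} * (B_j / j) * z^j / j!, where B_j are the Bernoulli numbers. -/
open PowerSeries

/-- The formal logarithm of a power series `f` (intended for `f` with constant term `1`):
the unique series with constant term `0` whose derivative is `f' / f`. -/
noncomputable def formalLog (f : PowerSeries ℚ) : PowerSeries ℚ :=
  PowerSeries.mk fun n =>
    if n = 0 then 0 else (PowerSeries.coeff (R := ℚ) (n - 1)) (PowerSeries.derivative ℚ f * f⁻¹) / n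

/-- The Bernoulli power series `z / (e^z - 1) = ∑_{j ≥ 0} B_j z^j / j!`. -/
noncomputable def bernoulliPS : PowerSeries ℚ :=
  PowerSeries.mk fun j => bernoulli j / j.factorial

/-!
With `B(z) = z / (e^z - 1)`, logarithmic differentiation gives
`z B'(z) / B(z) = 1 - z e^z / (e^z - 1) = 1 - ∑ (-1)^j B_j z^j / j!`, the second series being
the generating function of `bernoulli' j = (-1)^j B_j`. Comparing coefficients of
`z (log B)' = z B' / B` gives `j · [z^j] log B = (-1)^(j-1) B_j / j!` for `j ≥ 1`.
Over a domain, the identity for `z B'` follows from differentiating `B(z) (e^z - 1) = z` and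
cancelling the nonzero factor `e^z - 1`.
-/

lemma formalLog_eq_mk_coeff_X_mul (f : PowerSeries ℚ) :
    formalLog f = mk fun n => coeff n (X * (d⁄dX ℚ f * f⁻¹)) / (n : ℚ) := by
  ext (_ | n)
  · simp [formalLog]
  · simp [formalLog, coeff_succ_X_mul]

lemma bernoulliPS_eq_bernoulliPowerSeries : bernoulliPS = bernoulliPowerSeries ℚ := by
  ext n
  simp [bernoulliPS, bernoulliPowerSeries]

section

variable (A : Type*) [CommRing A] [IsDomain A] [Algebra ℚ A]

lemma exp_sub_one_ne_zero : exp A - 1 ≠ 0 := fun h => by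
  simpa using congr_arg (coeff 1) h

lemma X_mul_derivative_bernoulliPowerSeries :
    X * d⁄dX A (bernoulliPowerSeries A) =
      bernoulliPowerSeries A * (1 - bernoulli'PowerSeries A) := by
  set B := bernoulliPowerSeries A
  have hB : B * (exp A - 1) = X := bernoulliPowerSeries_mul_exp_sub_one A
  have hB' : bernoulli'PowerSeries A * (exp A - 1) = X * exp A :=
    bernoulli'PowerSeries_mul_exp_sub_one A
  have hdB : d⁄dX A B * (exp A - 1) + B * exp A = 1 := by
    simpa [Derivation.leibniz, derivative_exp, add_comm, mul_comm] using congr_arg (d⁄dX A) hB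
  refine mul_right_cancel₀ (exp_sub_one_ne_zero A) ?_
  linear_combination X * hdB - hB + B * hB'

end

lemma X_mul_logDeriv_bernoulliPowerSeries (k : Type*) [Field k] [Algebra ℚ k] :
    X * (d⁄dX k (bernoulliPowerSeries k) * (bernoulliPowerSeries k)⁻¹) =
      1 - bernoulli'PowerSeries k := by
  have h0 : constantCoeff (bernoulliPowerSeries k) ≠ 0 := by
    simp [bernoulliPowerSeries, ← coeff_zero_eq_constantCoeff_apply]
  rw [← mul_assoc, X_mul_derivative_bernoulliPowerSeries, mul_right_comm,
    PowerSeries.mul_inv_cancel _ h0, one_mul]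

/-- `log (z / (e^z - 1)) = ∑_{j ≥ 1} (-1)^{j-1} (B_j / j) z^j / j!`. -/
theorem formalLog_bernoulliPS :
    formalLog bernoulliPS =
      PowerSeries.mk fun j =>
        if j = 0 then 0 else (-1) ^ (j - 1) * (bernoulli j / j) * (1 / j.factorial) := by
  rw [formalLog_eq_mk_coeff_X_mul, bernoulliPS_eq_bernoulliPowerSeries,
    X_mul_logDeriv_bernoulliPowerSeries]
  ext (_ | n)
  · simp
  · simp only [map_sub, coeff_one, bernoulli'PowerSeries, coeff_mk, Algebra.algebraMap_self,
      RingHom.id_apply, bernoulli'_eq_bernoulli, n.succ_ne_zero, if_false, Nat.add_sub_cancel]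
    push_cast
    ring
end

section
/- For formal Laurent series: if F(z) is a formal Laurent series and g(z) is a formal power series with g(0) = 0 and g'(0) ≠ 0, then res F(z) = res F(g(z)) * g'(z), where res denotes the coefficient of z^{-1}. -/
/-!
Write `g = X h` with `h(0) ≠ 0`. Since `g'` is a power series, the residue of `F(g) g'` only sees
the coefficients of `F(g)` in negative degrees, and as `g ^ i` has order `i` these come from the
principal part of `F` alone; hence `res (F(g) g') = ∑_{i < 0} F_i res (g ^ i g')`. It remains to see
that `res (g ^ i g') = δ_{i,-1}`. For `i = -(n + 1)` this residue is the coefficient of `X ^ n` in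
`h⁻¹ ^ (n + 1) (X h)' = h⁻¹ ^ n + X h⁻¹ ^ (n + 1) h'`, and for `n ≥ 1` the two terms cancel because
`n h⁻¹ ^ (n + 1) h' = -(h⁻¹ ^ n)'`.
-/

open PowerSeries HahnSeries LaurentSeries

namespace PowerSeries

variable {K : Type*} [Field K]

theorem derivative_inv_pow (f : K⟦X⟧) (n : ℕ) :
    d⁄dX K (f⁻¹ ^ n) = -(n • (f⁻¹ ^ (n + 1) * d⁄dX K f)) := by
  cases n with
  | zero => simp
  | succ n => rw [derivative_pow, derivative_inv', nsmul_eq_mul]; push_cast; ring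

theorem coeff_inv_pow_succ_mul_derivative_X_mul [CharZero K] {h : K⟦X⟧}
    (hh : constantCoeff h ≠ 0) (n : ℕ) :
    coeff n (h⁻¹ ^ (n + 1) * d⁄dX K (X * h)) = if n = 0 then 1 else 0 := by
  have hsplit : h⁻¹ ^ (n + 1) * d⁄dX K (X * h) = h⁻¹ ^ n + X * (h⁻¹ ^ (n + 1) * d⁄dX K h) := by
    rw [Derivation.leibniz, derivative_X, smul_eq_mul, smul_eq_mul, mul_one]
    linear_combination h⁻¹ ^ n * PowerSeries.inv_mul_cancel h hh
  rw [hsplit, map_add]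
  cases n with
  | zero => simp
  | succ m =>
    have hD := coeff_derivative (h⁻¹ ^ (m + 1)) m
    rw [derivative_inv_pow, map_neg, map_nsmul, nsmul_eq_mul] at hD
    push_cast at hD
    rw [coeff_succ_X_mul, if_neg m.succ_ne_zero]
    apply mul_left_cancel₀ (Nat.cast_add_one_ne_zero m)
    linear_combination -hD

theorem coe_inv {h : K⟦X⟧} (hh : constantCoeff h ≠ 0) :
    ((h⁻¹ : K⟦X⟧) : K⸨X⸩) = (h : K⸨X⸩)⁻¹ :=
  (inv_eq_of_mul_eq_one_right (by rw [← coe_mul, PowerSeries.mul_inv_cancel h hh, coe_one])).symm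

theorem coe_zpow_neg {h : K⟦X⟧} (hh : constantCoeff h ≠ 0) (n : ℕ) :
    (h : K⸨X⸩) ^ (-(n : ℤ)) = ((h⁻¹ ^ n : K⟦X⟧) : K⸨X⸩) := by
  rw [zpow_neg, zpow_natCast, ← inv_pow, coe_pow, coe_inv hh]

theorem coe_X_mul_zpow (h : K⟦X⟧) (i : ℤ) :
    ((X * h : K⟦X⟧) : K⸨X⸩) ^ i = single i 1 * (h : K⸨X⸩) ^ i := by
  rw [coe_mul, coe_X, mul_zpow, ← RatFunc.single_zpow]

theorem coeff_coe_X_mul_zpow_of_lt {h : K⟦X⟧} (hh : constantCoeff h ≠ 0) {i a : ℤ}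
    (ha : a < i) : (((X * h : K⟦X⟧) : K⸨X⸩) ^ i).coeff a = 0 := by
  obtain ⟨u, hu⟩ : ∃ u : K⟦X⟧, (h : K⸨X⸩) ^ i = u := by
    obtain ⟨n, rfl | rfl⟩ := i.eq_nat_or_neg
    · exact ⟨h ^ n, by rw [zpow_natCast, coe_pow]⟩
    · exact ⟨h⁻¹ ^ n, coe_zpow_neg hh n⟩
  rw [coe_X_mul_zpow, hu, ← sub_add_cancel a i, coeff_single_mul_add, coeff_coe,
    if_pos (by omega), mul_zero]

theorem coeff_neg_one_coe_X_mul_zpow_mul_derivative [CharZero K] {h : K⟦X⟧}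
    (hh : constantCoeff h ≠ 0) (i : ℤ) :
    (((X * h : K⟦X⟧) : K⸨X⸩) ^ i * ((d⁄dX K (X * h) : K⟦X⟧) : K⸨X⸩)).coeff (-1) =
      if i = -1 then 1 else 0 := by
  rw [coe_X_mul_zpow, mul_assoc, ← sub_add_cancel (-1) i, coeff_single_mul_add, one_mul]
  rcases le_or_gt 0 i with hi | hi
  · lift i to ℕ using hi
    rw [zpow_natCast, ← coe_pow, ← coe_mul, coeff_coe, if_pos (by omega), if_neg (by omega)]
  · obtain ⟨n, rfl⟩ : ∃ n : ℕ, i = -(n + 1 : ℕ) := ⟨(-i - 1).toNat, by omega⟩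
    rw [coe_zpow_neg hh, ← coe_mul, show -1 - -((n + 1 : ℕ) : ℤ) = n by push_cast; ring,
      coeff_coe_powerSeries, coeff_inv_pow_succ_mul_derivative_X_mul hh]
    exact if_congr (by omega) rfl rfl

end PowerSeries

namespace LaurentSeries

theorem coeff_mul_coe_eq_of_coeff_eq {R : Type*} [Ring R] {f f' : R⸨X⸩} (u : R⟦X⟧) {n : ℤ}
    (hff' : ∀ a ≤ n, f.coeff a = f'.coeff a) : (f * u).coeff n = (f' * u).coeff n := by
  rw [← sub_eq_zero, ← HahnSeries.coeff_sub, ← sub_mul, HahnSeries.coeff_mul]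
  refine Finset.sum_eq_zero fun ⟨a, b⟩ hab => ?_
  obtain ⟨ha, hb, rfl⟩ := Finset.mem_antidiagonal.mp hab
  have hb0 : 0 ≤ b := not_lt.mp fun hb' => hb (by rw [PowerSeries.coeff_coe, if_pos hb'])
  exact absurd (sub_eq_zero.mpr (hff' a (by omega))) ha

end LaurentSeries

/-- `Fg` encodes the composition `F(g(z))` coefficientwise; truncating the sum at `i ≤ k` loses
nothing since `g ^ i` has order `i`. -/
theorem laurentSeries_residue_change_of_variables {K : Type*} [Field K] [CharZero K]
    (F : LaurentSeries K) (g : PowerSeries K)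
    (hg0 : PowerSeries.constantCoeff g = 0) (hg1 : PowerSeries.coeff 1 g ≠ 0)
    (Fg : LaurentSeries K)
    (hFg : ∀ k : ℤ, Fg.coeff k =
      ∑ i ∈ Finset.Icc F.order k, F.coeff i * (((g : LaurentSeries K)) ^ i).coeff k) :
    F.coeff (-1) =
      (Fg * ((PowerSeries.derivative K g : PowerSeries K) : LaurentSeries K)).coeff (-1) := by
  obtain ⟨h, rfl⟩ := X_dvd_iff.mpr hg0
  have hh : constantCoeff h ≠ 0 := by
    rwa [← zero_add 1, coeff_succ_X_mul, coeff_zero_eq_constantCoeff] at hg1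
  set P : K⸨X⸩ :=
    ∑ i ∈ Finset.Icc F.order (-1), HahnSeries.C (F.coeff i) * ((X * h : K⟦X⟧) : K⸨X⸩) ^ i
  have hFgP : ∀ a ≤ -1, Fg.coeff a = P.coeff a := by
    intro a ha
    simp only [hFg, P, coeff_sum, C_mul_eq_smul, HahnSeries.coeff_smul, smul_eq_mul]
    refine Finset.sum_subset (Finset.Icc_subset_Icc_right ha) fun i hi hia => ?_
    simp only [Finset.mem_Icc, not_and, not_le] at hi hia
    rw [coeff_coe_X_mul_zpow_of_lt hh (hia hi.1), mul_zero]
  rw [coeff_mul_coe_eq_of_coeff_eq _ hFgP]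
  simp only [P, Finset.sum_mul, mul_assoc]
  simp only [coeff_sum, C_mul_eq_smul, HahnSeries.coeff_smul,
    coeff_neg_one_coe_X_mul_zpow_mul_derivative hh, smul_eq_mul, mul_ite, mul_one, mul_zero,
    Finset.sum_ite_eq', Finset.mem_Icc, le_refl, and_true]
  split_ifs with hF
  · rfl
  · exact coeff_eq_zero_of_lt_order (by omega)
end

section
/- The restricted partition function p_A(t), counting nonnegative integer solutions to m_1*a_1 + ... + m_n*a_n = t, is a quasi-polynomial in t of degree n-1; that is, there exist a positive integer N and polynomials q_0, ..., q_{N-1} of degree at most n-1 such that p_A(t) = q_{t mod N}(t) for all nonnegative integers t, with at least one q_i of degree exactly n-1. -/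
open Polynomial Finset

/-- The restricted partition function. -/
noncomputable def restrictedPartition (n : ℕ) (a : Fin n → ℕ) (t : ℕ) : ℕ :=
  Nat.card {m : Fin n → ℕ // ∑ i, m i * a i = t}

def IsQP (f : ℕ → ℚ) (d : ℕ) : Prop :=
  ∃ N : ℕ, 0 < N ∧ ∃ q : ℕ → Polynomial ℚ,
    (∀ i, (q i).degree ≤ d) ∧ ∀ t, f t = (q (t % N)).eval (t : ℚ)

lemma rp_finite {n : ℕ} {a : Fin n → ℕ} (ha : ∀ i, 0 < a i) (t : ℕ) :
    Finite {m : Fin n → ℕ // ∑ i, m i * a i = t} := by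
  apply Finite.of_injective (fun m => (fun i => (⟨min (m.1 i) t, by omega⟩ : Fin (t+1))))
  intro m m' h
  ext i
  have hb : ∀ (m : {m : Fin n → ℕ // ∑ i, m i * a i = t}) i, m.1 i ≤ t := by
    intro m i
    calc m.1 i ≤ m.1 i * a i := Nat.le_mul_of_pos_right _ (ha i)
    _ ≤ ∑ i, m.1 i * a i := Finset.single_le_sum (f := fun i => m.1 i * a i) (fun _ _ => Nat.zero_le _) (Finset.mem_univ i)
    _ = t := m.2
  have := congrFun h i
  simp only [Fin.mk.injEq] at this
  have h1 := hb m i; have h2 := hb m' i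
  omega

lemma rp_one {a : Fin 1 → ℕ} (ha : 0 < a 0) (t : ℕ) :
    restrictedPartition 1 a t = if t % a 0 = 0 then 1 else 0 := by
  rw [restrictedPartition]
  have hs : ∀ m : Fin 1 → ℕ, (∑ i, m i * a i) = m 0 * a 0 := fun m => Fin.sum_univ_one _
  split
  · rename_i h
    have hdvd : a 0 ∣ t := Nat.dvd_of_mod_eq_zero h
    have : Unique {m : Fin 1 → ℕ // ∑ i, m i * a i = t} :=
      { default := ⟨fun _ => t / a 0, by rw [hs]; exact Nat.div_mul_cancel hdvd⟩
        uniq := fun m => by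
          apply Subtype.ext; funext i
          have hm := m.2; rw [hs] at hm
          have hi : i = 0 := Subsingleton.elim _ _
          subst hi
          show m.1 0 = t / a 0
          exact (Nat.div_eq_of_eq_mul_left ha hm.symm).symm }
    exact Nat.card_unique
  · rename_i h
    have : IsEmpty {m : Fin 1 → ℕ // ∑ i, m i * a i = t} := by
      constructor; rintro ⟨m, hm⟩
      rw [hs] at hm
      exact h (hm ▸ Nat.mul_mod_left _ _)
    exact Nat.card_of_isEmpty

-- discrete antiderivative
lemma poly_antideriv (H : Polynomial ℚ) (d : ℕ) (hd : H.degree ≤ d) :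
    ∃ G : Polynomial ℚ, G.degree ≤ d + 1 ∧
      ∀ k : ℕ, G.eval (k : ℚ) = ∑ u ∈ Finset.range k, H.eval (u : ℚ) := by
  classical
  have mono : ∀ p : ℕ, ∃ G : Polynomial ℚ, G.degree ≤ p + 1 ∧
      ∀ k : ℕ, G.eval (k : ℚ) = ∑ u ∈ Finset.range k, (u : ℚ) ^ p := by
    intro p
    refine ⟨∑ i ∈ Finset.range (p + 1),
      Polynomial.C (_root_.bernoulli i * ((p + 1).choose i) / (p + 1)) * Polynomial.X ^ (p + 1 - i),
      ?_, ?_⟩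
    · refine (Polynomial.degree_sum_le _ _).trans ?_
      rw [Finset.sup_le_iff]
      intro i hi
      refine (Polynomial.degree_C_mul_X_pow_le _ _).trans ?_
      have h1 : p + 1 - i ≤ p + 1 := by omega
      exact_mod_cast h1
    · intro k
      rw [sum_range_pow]
      rw [Polynomial.eval_finset_sum]
      refine Finset.sum_congr rfl fun i hi => ?_
      simp [div_eq_mul_inv, mul_comm, mul_assoc, mul_left_comm]
  choose Gp hGpdeg hGpeval using mono
  by_cases h0 : H = 0
  · exact ⟨0, by simp, by simp [h0]⟩
  have hnd : H.natDegree ≤ d := Polynomial.natDegree_le_iff_degree_le.2 hd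
  refine ⟨∑ p ∈ Finset.range (H.natDegree + 1), Polynomial.C (H.coeff p) * Gp p, ?_, ?_⟩
  · refine (Polynomial.degree_sum_le _ _).trans ?_
    rw [Finset.sup_le_iff]
    intro p hp
    refine (Polynomial.degree_mul_le _ _).trans ?_
    refine le_trans (add_le_add Polynomial.degree_C_le (hGpdeg p)) ?_
    simp only [Finset.mem_range] at hp
    rw [zero_add]
    have h1 : p + 1 ≤ d + 1 := by omega
    exact_mod_cast h1
  · intro k
    rw [Polynomial.eval_finset_sum]
    simp only [Polynomial.eval_mul, Polynomial.eval_C, hGpeval]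
    simp_rw [Finset.mul_sum]
    rw [Finset.sum_comm]
    exact Finset.sum_congr rfl fun u _ => (Polynomial.eval_eq_sum_range _).symm

lemma rp_rec {n : ℕ} {a : Fin (n+1) → ℕ} (ha : ∀ i, 0 < a i) (t : ℕ) :
    restrictedPartition (n+1) a t =
      ∑ j ∈ Finset.range (t / a (Fin.last n) + 1),
        restrictedPartition n (fun i => a i.castSucc) (t - j * a (Fin.last n)) := by
  have hpos : 0 < a (Fin.last n) := ha _
  have key : ∀ m : Fin (n+1) → ℕ, (∑ i, m i * a i) =
      (∑ i : Fin n, m i.castSucc * a i.castSucc) + m (Fin.last n) * a (Fin.last n) := by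
    intro m; rw [Fin.sum_univ_castSucc]
  let E : {m : Fin (n+1) → ℕ // ∑ i, m i * a i = t} ≃
      Σ j : Fin (t / a (Fin.last n) + 1),
        {m' : Fin n → ℕ // ∑ i, m' i * a i.castSucc = t - j.1 * a (Fin.last n)} :=
    { toFun := fun m => ⟨⟨m.1 (Fin.last n), by
        have h := m.2; rw [key] at h
        have : m.1 (Fin.last n) * a (Fin.last n) ≤ t := by omega
        have := Nat.div_le_div_right (c := a (Fin.last n)) this
        rw [Nat.mul_div_cancel _ hpos] at this
        omega⟩,
        ⟨fun i => m.1 i.castSucc, by have h := m.2; rw [key] at h; dsimp only; omega⟩⟩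
      invFun := fun p => ⟨Fin.snoc p.2.1 p.1.1, by
        have hj : p.1.1 * a (Fin.last n) ≤ t := by
          have := p.1.2
          have h2 : p.1.1 ≤ t / a (Fin.last n) := by omega
          calc p.1.1 * a (Fin.last n) ≤ (t / a (Fin.last n)) * a (Fin.last n) :=
            Nat.mul_le_mul_right _ h2
          _ ≤ t := Nat.div_mul_le_self _ _
        rw [key]
        simp only [Fin.snoc_castSucc, Fin.snoc_last]
        rw [p.2.2]; omega⟩
      left_inv := fun m => Subtype.ext (Fin.snoc_init_self m.1)
      right_inv := fun p => by
        obtain ⟨⟨j, hj⟩, ⟨m', hm⟩⟩ := p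
        have h1 : Fin.snoc (α := fun _ => ℕ) m' j (Fin.last n) = j := Fin.snoc_last _ _
        refine Sigma.ext (Fin.ext ?_) ?_
        · simpa using h1
        · refine (Subtype.heq_iff_coe_eq ?_).2 ?_
          · intro x
            dsimp only
            rw [h1]
          · funext i
            simp [Fin.snoc_castSucc] }
  have hcard := Nat.card_congr E
  rw [restrictedPartition, hcard]
  have : ∀ j : Fin (t / a (Fin.last n) + 1), Finite
      {m' : Fin n → ℕ // ∑ i, m' i * a i.castSucc = t - j.1 * a (Fin.last n)} :=
    fun j => rp_finite (fun i => ha i.castSucc) _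
  have := fun j : Fin (t / a (Fin.last n) + 1) => Fintype.ofFinite
      {m' : Fin n → ℕ // ∑ i, m' i * a i.castSucc = t - j.1 * a (Fin.last n)}
  rw [Nat.card_eq_fintype_card, Fintype.card_sigma,
    ← Fin.sum_univ_eq_sum_range (fun j => restrictedPartition n (fun i => a i.castSucc) (t - j * a (Fin.last n)))]
  exact Finset.sum_congr rfl fun j _ => by rw [restrictedPartition, Nat.card_eq_fintype_card]

lemma degree_comp_linear_le (p : Polynomial ℚ) (c e : ℚ) (he : e ≠ 0) (d : ℕ)
    (hp : p.degree ≤ d) : (p.comp (Polynomial.C c + Polynomial.C e * Polynomial.X)).degree ≤ d := by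
  by_cases hp0 : p = 0
  · simp [hp0]
  rw [← Polynomial.natDegree_le_iff_degree_le, Polynomial.natDegree_comp]
  have h1 : (Polynomial.C c + Polynomial.C e * Polynomial.X).natDegree = 1 := by
    rw [add_comm]; exact Polynomial.natDegree_linear he
  rw [h1, mul_one]
  exact Polynomial.natDegree_le_iff_degree_le.2 hp

lemma qp_sum {f : ℕ → ℚ} {d : ℕ} (hf : IsQP f d) {b : ℕ} (hb : 0 < b) :
    IsQP (fun t => ∑ j ∈ Finset.range (t / b + 1), f (t - j * b)) (d + 1) := by
  obtain ⟨N, hN, q, hdeg, heval⟩ := hf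
  have hP : 0 < N * b := Nat.mul_pos hN hb
  have hPQ : ((N : ℚ) * b) ≠ 0 := by positivity
  set H : ℕ → Polynomial ℚ := fun r => ∑ v ∈ Finset.range N,
    (q ((N * b + r - v * b) % N)).comp
      (Polynomial.C ((N * b + r - v * b : ℕ) : ℚ) + Polynomial.C ((N * b : ℕ) : ℚ) * Polynomial.X)
    with hH
  have hHdeg : ∀ r, (H r).degree ≤ d := by
    intro r
    refine (Polynomial.degree_sum_le _ _).trans ?_
    rw [Finset.sup_le_iff]
    intro v hv
    refine degree_comp_linear_le _ _ _ ?_ d (hdeg _)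
    push_cast
    exact hPQ
  choose G hGdeg hGeval using fun r => poly_antideriv (H r) d (hHdeg r)
  refine ⟨N * b, hP, fun r => (G r).comp
      (Polynomial.C (-(r : ℚ) / (N * b)) + Polynomial.C ((N : ℚ) * b)⁻¹ * Polynomial.X)
    + Polynomial.C (∑ j ∈ Finset.range (r / b + 1), f (r - j * b)), ?_, ?_⟩
  · intro r
    refine (Polynomial.degree_add_le _ _).trans (max_le ?_ ?_)
    · exact degree_comp_linear_le _ _ _ (inv_ne_zero hPQ) _ (hGdeg r)
    · refine Polynomial.degree_C_le.trans ?_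
      exact_mod_cast Nat.zero_le (d + 1)
  · intro t
    set r := t % (N * b) with hr
    set k := t / (N * b) with hk
    have htk : t = (N * b) * k + r := (Nat.div_add_mod t (N * b)).symm
    have hrP : r < N * b := Nat.mod_lt _ hP
    -- step 1 : split the sum
    have hdiv : t / b = N * k + (r / b) := by
      rw [htk, show (N * b) * k + r = r + (N * k) * b by ring]
      rw [Nat.add_mul_div_right _ _ hb, Nat.add_comm]
    have hsplit : (∑ j ∈ Finset.range (t / b + 1), f (t - j * b)) =
        (∑ j ∈ Finset.range (N * k), f (t - j * b)) +
        (∑ j ∈ Finset.range (r / b + 1), f (r - j * b)) := by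
      rw [hdiv, show N * k + r / b + 1 = N * k + (r / b + 1) by ring, Finset.sum_range_add]
      congr 1
      refine Finset.sum_congr rfl fun j' hj' => ?_
      congr 1
      have e2 : (N * k + j') * b = (N * b) * k + j' * b := by ring
      omega
    -- step 2 : the main sum equals a polynomial sum
    have hterm : ∀ u ∈ Finset.range k, ∀ v ∈ Finset.range N,
        f (t - (u * N + v) * b) = (q ((N * b + r - v * b) % N)).eval
          (((N * b + r - v * b : ℕ) : ℚ) + ((N * b : ℕ) : ℚ) * ((k - 1 - u : ℕ) : ℚ)) := by
      intro u hu v hv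
      rw [Finset.mem_range] at hu hv
      have hvb : v * b ≤ N * b := Nat.mul_le_mul_right _ (le_of_lt hv)
      have e0 : (N * b) * k = (N * b) * (k - 1 - u) + (N * b) * u + N * b := by
        conv_lhs => rw [show k = (k - 1 - u) + u + 1 by omega]
        ring
      have e2 : (u * N + v) * b = (N * b) * u + v * b := by ring
      have e3 : t - (u * N + v) * b = (N * b) * (k - 1 - u) + (N * b + r - v * b) := by omega
      have e5 : (N * b) * (k - 1 - u) = (b * (k - 1 - u)) * N := by ring
      have e4 : t - (u * N + v) * b = (N * b + r - v * b) + (b * (k - 1 - u)) * N := by omega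
      have e6 : (t - (u * N + v) * b) % N = (N * b + r - v * b) % N := by
        rw [e4, Nat.add_mul_mod_self_right]
      rw [heval, e6]
      congr 1
      rw [e3]
      push_cast
      ring
    have hmain : (∑ j ∈ Finset.range (N * k), f (t - j * b)) =
        ∑ u ∈ Finset.range k, (H r).eval (u : ℚ) := by
      rw [show N * k = k * N by ring]
      have h1 : (∑ j ∈ Finset.range (k * N), f (t - j * b)) =
          ∑ p ∈ Finset.range k ×ˢ Finset.range N, f (t - (p.1 * N + p.2) * b) := by
        refine Finset.sum_nbij' (fun j => (j / N, j % N)) (fun p => p.1 * N + p.2)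
          ?_ ?_ ?_ ?_ ?_
        · intro j hj
          rw [Finset.mem_range] at hj
          rw [Finset.mem_product, Finset.mem_range, Finset.mem_range]
          exact ⟨(Nat.div_lt_iff_lt_mul hN).2 hj, Nat.mod_lt _ hN⟩
        · intro p hp
          rw [Finset.mem_product, Finset.mem_range, Finset.mem_range] at hp
          rw [Finset.mem_range]
          calc p.1 * N + p.2 < p.1 * N + N := by omega
          _ = (p.1 + 1) * N := by ring
          _ ≤ k * N := Nat.mul_le_mul_right _ (by omega)
        · intro j hj
          exact Nat.div_add_mod' j N
        · intro p hp
          rw [Finset.mem_product, Finset.mem_range, Finset.mem_range] at hp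
          have h2 : (p.1 * N + p.2) / N = p.1 := by
            rw [add_comm, Nat.add_mul_div_right _ _ hN, Nat.div_eq_of_lt hp.2, zero_add]
          have h3 : (p.1 * N + p.2) % N = p.2 := by
            rw [add_comm, Nat.add_mul_mod_self_right, Nat.mod_eq_of_lt hp.2]
          exact Prod.ext h2 h3
        · intro j hj
          show f (t - j * b) = f (t - (j / N * N + j % N) * b)
          rw [Nat.div_add_mod']
      rw [h1, Finset.sum_product]
      rw [Finset.sum_congr rfl (fun u hu => Finset.sum_congr rfl (fun v hv => hterm u hu v hv))]
      rw [Finset.sum_range_reflect (fun u => ∑ v ∈ Finset.range N,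
        (q ((N * b + r - v * b) % N)).eval
          (((N * b + r - v * b : ℕ) : ℚ) + ((N * b : ℕ) : ℚ) * (u : ℚ))) k]
      refine Finset.sum_congr rfl fun u hu => ?_
      rw [hH]
      rw [Polynomial.eval_finset_sum]
      refine Finset.sum_congr rfl fun v hv => ?_
      rw [Polynomial.eval_comp]
      simp
    -- assemble
    show (∑ j ∈ Finset.range (t / b + 1), f (t - j * b)) = _
    rw [hsplit, hmain, ← hGeval r k]
    rw [Polynomial.eval_add, Polynomial.eval_C, Polynomial.eval_comp]
    congr 2
    have htQ : (t : ℚ) = (N : ℚ) * b * k + r := by exact_mod_cast congrArg (Nat.cast (R := ℚ)) htk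
    simp only [Polynomial.eval_add, Polynomial.eval_mul, Polynomial.eval_C, Polynomial.eval_X]
    rw [htQ]
    field_simp
    ring

lemma rp_qp : ∀ n : ℕ, 0 < n → ∀ a : Fin n → ℕ, (∀ i, 0 < a i) →
    IsQP (fun t => (restrictedPartition n a t : ℚ)) (n - 1) := by
  intro n
  induction n with
  | zero => omega
  | succ n ih =>
    intro _ a ha
    rcases Nat.eq_zero_or_pos n with hn0 | hn0
    · subst hn0
      refine ⟨a 0, ha 0, fun i => if i = 0 then 1 else 0, ?_, ?_⟩
      · intro i
        dsimp only
        split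
        · exact Polynomial.degree_one_le.trans (by exact_mod_cast Nat.zero_le 0)
        · simp
      · intro t
        show ((restrictedPartition 1 a t : ℕ) : ℚ) = _
        rw [rp_one (ha 0) t]
        dsimp only
        split <;> rename_i h <;> simp [h]
    · have hqp := ih hn0 (fun i => a i.castSucc) (fun i => ha i.castSucc)
      have h2 := qp_sum hqp (ha (Fin.last n))
      have hfun : (fun t => ((restrictedPartition (n+1) a t : ℚ))) =
          (fun t => ∑ j ∈ Finset.range (t / a (Fin.last n) + 1),
            ((restrictedPartition n (fun i => a i.castSucc) (t - j * a (Fin.last n)) : ℕ) : ℚ)) := by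
        funext t
        rw [rp_rec ha t]
        push_cast
        rfl
      rw [show n + 1 - 1 = (n - 1) + 1 by omega, hfun]
      exact h2

lemma rp_lower {e : ℕ} (a : Fin (e+1) → ℕ) (ha : ∀ i, 0 < a i) (s c : ℕ) (hsc : e * s ≤ c) :
    (s+1)^e ≤ restrictedPartition (e+1) a ((∏ i, a i) * c) := by
  classical
  set L := ∏ i, a i with hL
  have hLpos : 0 < L := Finset.prod_pos (fun i _ => ha i)
  have hdvd : ∀ i, a i ∣ L := fun i => Finset.dvd_prod_of_mem _ (Finset.mem_univ i)
  have hdivpos : ∀ i, 0 < L / a i := fun i => Nat.div_pos (Nat.le_of_dvd hLpos (hdvd i)) (ha i)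
  have : Finite {m : Fin (e+1) → ℕ // ∑ i, m i * a i = L * c} := rp_finite ha _
  have hsum : ∀ d : Fin e → Fin (s+1), (∑ i, (d i : ℕ)) ≤ c := by
    intro d
    calc (∑ i, (d i : ℕ)) ≤ ∑ _i : Fin e, s :=
      Finset.sum_le_sum (fun i _ => Nat.lt_succ_iff.1 (d i).2)
    _ = e * s := by simp [Finset.sum_const, Finset.card_univ, mul_comm]
    _ ≤ c := hsc
  let F : (Fin e → Fin (s+1)) → {m : Fin (e+1) → ℕ // ∑ i, m i * a i = L * c} := fun d =>
    ⟨Fin.snoc (fun i => (d i : ℕ) * (L / a i.castSucc))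
      ((c - ∑ i, (d i : ℕ)) * (L / a (Fin.last e))), by
      rw [Fin.sum_univ_castSucc]
      simp only [Fin.snoc_castSucc, Fin.snoc_last]
      have hterm : ∀ i : Fin e, (d i : ℕ) * (L / a i.castSucc) * a i.castSucc = (d i : ℕ) * L := by
        intro i
        rw [mul_assoc, Nat.div_mul_cancel (hdvd i.castSucc)]
      rw [Finset.sum_congr rfl (fun i _ => hterm i), ← Finset.sum_mul,
        mul_assoc, Nat.div_mul_cancel (hdvd (Fin.last e)), ← Nat.add_mul]
      rw [Nat.add_sub_cancel' (hsum d), Nat.mul_comm]⟩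
  have hFinj : Function.Injective F := by
    intro d d' h
    have h2 := congrArg Subtype.val h
    funext i
    have h3 : (d i : ℕ) * (L / a i.castSucc) = (d' i : ℕ) * (L / a i.castSucc) := by
      have h4 := congrFun h2 i.castSucc
      simpa [F, Fin.snoc_castSucc] using h4
    exact Fin.ext (Nat.eq_of_mul_eq_mul_right (hdivpos _) h3)
  calc (s+1)^e = Nat.card (Fin e → Fin (s+1)) := by
        simp [Nat.card_eq_fintype_card]
  _ ≤ Nat.card {m : Fin (e+1) → ℕ // ∑ i, m i * a i = L * c} :=
      Nat.card_le_card_of_injective F hFinj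
  _ = restrictedPartition (e+1) a (L * c) := rfl

lemma poly_growth (Q : Polynomial ℚ) (e M : ℕ) (hM : 0 < M) (hdeg : Q.degree ≤ e)
    (hlow : ∀ k : ℕ, (((k+1 : ℕ) : ℚ))^e ≤ Q.eval ((M*k : ℕ) : ℚ)) : Q.degree = (e : ℕ) := by
  by_contra hne
  have hlt : Q.degree < e := lt_of_le_of_ne hdeg hne
  have hQ0 : Q ≠ 0 := by
    intro h0
    have := hlow 0
    rw [h0] at this
    norm_num at this
  have hnd : Q.natDegree < e := (Polynomial.natDegree_lt_iff_degree_lt hQ0).2 hlt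
  have he : 1 ≤ e := by omega
  set Cb : ℚ := ∑ i ∈ Finset.range (Q.natDegree + 1), |Q.coeff i| with hCb
  have hCbnn : 0 ≤ Cb := Finset.sum_nonneg fun i _ => abs_nonneg _
  have hbound : ∀ x : ℚ, 1 ≤ x → Q.eval x ≤ Cb * x ^ (e - 1) := by
    intro x hx
    have hx0 : 0 ≤ x := le_trans zero_le_one hx
    calc Q.eval x ≤ |Q.eval x| := le_abs_self _
    _ = |∑ i ∈ Finset.range (Q.natDegree + 1), Q.coeff i * x ^ i| := by
        rw [Polynomial.eval_eq_sum_range]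
    _ ≤ ∑ i ∈ Finset.range (Q.natDegree + 1), |Q.coeff i * x ^ i| :=
        Finset.abs_sum_le_sum_abs _ _
    _ = ∑ i ∈ Finset.range (Q.natDegree + 1), |Q.coeff i| * x ^ i := by
        refine Finset.sum_congr rfl fun i _ => ?_
        rw [abs_mul, abs_pow, abs_of_nonneg hx0]
    _ ≤ ∑ i ∈ Finset.range (Q.natDegree + 1), |Q.coeff i| * x ^ (e - 1) := by
        refine Finset.sum_le_sum fun i hi => ?_
        rw [Finset.mem_range] at hi
        exact mul_le_mul_of_nonneg_left (pow_le_pow_right₀ hx (by omega)) (abs_nonneg _)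
    _ = Cb * x ^ (e - 1) := by rw [← Finset.sum_mul]
  -- derive `k + 1 ≤ Cb * M ^ (e-1)` for every k ≥ 1
  have hkb : ∀ k : ℕ, 1 ≤ k → ((k+1 : ℕ) : ℚ) ≤ Cb * (M : ℚ) ^ (e - 1) := by
    intro k hk
    set x : ℚ := ((k+1 : ℕ) : ℚ) with hxdef
    have hx1 : (1 : ℚ) ≤ x := by rw [hxdef]; exact_mod_cast Nat.le_add_left 1 k
    have hMk1 : (1 : ℚ) ≤ ((M*k : ℕ) : ℚ) := by
      exact_mod_cast Nat.one_le_iff_ne_zero.2 (by positivity)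
    have h1 : x ^ e ≤ Cb * ((M*k : ℕ) : ℚ) ^ (e - 1) :=
      le_trans (hlow k) (hbound _ hMk1)
    have h2 : ((M*k : ℕ) : ℚ) ≤ (M : ℚ) * x := by
      rw [hxdef]
      push_cast
      have hkk : (k : ℚ) ≤ (k : ℚ) + 1 := by linarith
      exact mul_le_mul_of_nonneg_left hkk (by positivity)
    have h3 : ((M*k : ℕ) : ℚ) ^ (e-1) ≤ ((M : ℚ) * x) ^ (e-1) :=
      pow_le_pow_left₀ (by positivity) h2 _
    have h4 : x ^ e ≤ Cb * (M : ℚ) ^ (e-1) * x ^ (e-1) := by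
      calc x ^ e ≤ Cb * ((M*k : ℕ) : ℚ) ^ (e - 1) := h1
      _ ≤ Cb * ((M : ℚ) * x) ^ (e-1) := by
          exact mul_le_mul_of_nonneg_left h3 hCbnn
      _ = Cb * (M : ℚ) ^ (e-1) * x ^ (e-1) := by rw [mul_pow]; ring
    have h5 : x ^ e = x ^ (e-1) * x := by
      rw [← pow_succ]
      congr 1
      omega
    have hxp : (0:ℚ) < x ^ (e-1) := by positivity
    rw [h5] at h4
    calc x ≤ Cb * (M:ℚ)^(e-1) * x^(e-1) / x^(e-1) := by
          rw [le_div_iff₀ hxp]; linarith [h4]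
    _ = Cb * (M:ℚ)^(e-1) := by field_simp
  obtain ⟨k0, hk0⟩ := exists_nat_gt (Cb * (M : ℚ) ^ (e-1))
  have := hkb (k0 + 1) (by omega)
  have hc : (Cb * (M:ℚ)^(e-1)) < ((k0 + 1 + 1 : ℕ) : ℚ) := by
    push_cast
    push_cast at hk0
    linarith
  linarith

/-- `p_A(t)` is a quasi-polynomial of degree `n - 1`: there is a period `N > 0` and
polynomials `q_0, ..., q_{N-1}` of degree at most `n - 1` with
`p_A(t) = q_{t mod N}(t)`, at least one of which has degree exactly `n - 1`. -/
theorem restrictedPartition_isQuasiPolynomial (n : ℕ) (hn : 0 < n) (a : Fin n → ℕ)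
    (ha : ∀ i, 0 < a i) :
    ∃ N : ℕ, 0 < N ∧ ∃ q : ℕ → Polynomial ℚ,
      (∀ i < N, (q i).degree ≤ (n - 1 : ℕ)) ∧
      (∀ t : ℕ, (restrictedPartition n a t : ℚ) = (q (t % N)).eval (t : ℚ)) ∧
      (∃ i < N, (q i).degree = (n - 1 : ℕ)) := by
  obtain ⟨e, rfl⟩ : ∃ e, n = e + 1 := ⟨n - 1, by omega⟩
  obtain ⟨N, hN, q, hdeg, heval⟩ := rp_qp (e+1) hn a ha
  have he1 : e + 1 - 1 = e := rfl
  refine ⟨N, hN, q, fun i _ => by rw [he1]; exact hdeg i, fun t => heval t, 0, hN, ?_⟩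
  rw [he1]
  set L := ∏ i, a i with hL
  have hLpos : 0 < L := Finset.prod_pos (fun i _ => ha i)
  set M := N * L * (e + 1) with hM
  have hMpos : 0 < M := by positivity
  refine poly_growth (q 0) e M hMpos (he1 ▸ hdeg 0) ?_
  intro k
  have hle : e * k ≤ N * (e+1) * k := by
    refine Nat.mul_le_mul_right k ?_
    calc e ≤ e + 1 := by omega
    _ ≤ N * (e + 1) := Nat.le_mul_of_pos_left _ hN
  have hlow := rp_lower a ha k (N * (e+1) * k) hle
  have hrw : L * (N * (e+1) * k) = M * k := by rw [hM]; ring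
  rw [hrw] at hlow
  have hmod : (M * k) % N = 0 := by
    rw [show M * k = N * (L * (e+1) * k) by rw [hM]; ring, Nat.mul_mod_right]
  have hcast : ((restrictedPartition (e+1) a (M*k) : ℕ) : ℚ) = (q 0).eval ((M*k : ℕ) : ℚ) := by
    have := heval (M * k)
    rwa [hmod] at this
  rw [← hcast]
  exact_mod_cast hlow
end

section
/- If a_1, ..., a_n are pairwise relatively prime, then Q_A(t) := p_A(t) - P_A(t) is a periodic function of t (with period a_1 ⋯ a_n) whose average over one period is 0. -/
open Polynomial
open scoped Classical

/-! ### Auxiliary polynomial lemmas -/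

noncomputable def polyStep (x : ℕ) (μ : ℂ) (Q : Polynomial ℂ) : Polynomial ℂ :=
  μ ^ x • Q.comp (X + C (x : ℂ)) - Q

lemma natDegree_compShift (Q : Polynomial ℂ) (c : ℂ) :
    (Q.comp (X + C c)).natDegree = Q.natDegree := by
  rw [natDegree_comp, natDegree_X_add_C, mul_one]

lemma leadingCoeff_compShift (Q : Polynomial ℂ) (c : ℂ) :
    (Q.comp (X + C c)).leadingCoeff = Q.leadingCoeff := by
  rw [leadingCoeff_comp (by simp [natDegree_X_add_C]), leadingCoeff_X_add_C, one_pow, mul_one]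

lemma eval_nat_zero (Q : Polynomial ℂ) (h : ∀ t : ℕ, Q.eval (t : ℂ) = 0) : Q = 0 := by
  apply Polynomial.eq_zero_of_infinite_isRoot
  apply Set.Infinite.mono (s := (fun k : ℕ => (k : ℂ)) '' Set.univ)
  · rintro x ⟨k, -, rfl⟩; exact h k
  · exact Set.Infinite.image (fun x _ y _ h => by exact_mod_cast h) Set.infinite_univ

lemma natDegree_eq_zero_of_comp_shift_eq (Q : Polynomial ℂ) (c : ℂ) (hc : c ≠ 0)
    (h : Q.comp (X + C c) = Q) : Q.natDegree = 0 := by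
  have heval : ∀ z : ℂ, Q.eval (z + c) = Q.eval z := by
    intro z
    conv_rhs => rw [← h]
    simp [eval_comp]
  have hk : ∀ k : ℕ, Q.eval ((k : ℂ) * c) = Q.eval 0 := by
    intro k
    induction k with
    | zero => simp
    | succ k ih => push_cast; rw [add_mul, one_mul, heval, ih]
  have : Q - C (Q.eval 0) = 0 := by
    apply Polynomial.eq_zero_of_infinite_isRoot
    apply Set.Infinite.mono (s := (fun k : ℕ => (k : ℂ) * c) '' Set.univ)
    · rintro x ⟨k, -, rfl⟩
      simp [IsRoot, hk k]
    · apply Set.Infinite.image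
      · intro x _ y _ hxy
        have := mul_right_cancel₀ hc hxy
        exact_mod_cast this
      · exact Set.infinite_univ
  have hQ : Q = C (Q.eval 0) := sub_eq_zero.mp this
  rw [hQ, natDegree_C]

lemma polyStep_coeff_top (x : ℕ) (μ : ℂ) (Q : Polynomial ℂ) :
    (polyStep x μ Q).coeff Q.natDegree = (μ ^ x - 1) * Q.leadingCoeff := by
  have h1 : (Q.comp (X + C (x:ℂ))).coeff Q.natDegree = Q.leadingCoeff := by
    rw [← natDegree_compShift Q (x:ℂ), coeff_natDegree, leadingCoeff_compShift]
  simp only [polyStep, coeff_sub, coeff_smul, smul_eq_mul, h1, coeff_natDegree]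
  ring

lemma polyStep_natDegree_le (x : ℕ) (μ : ℂ) (Q : Polynomial ℂ) :
    (polyStep x μ Q).natDegree ≤ Q.natDegree := by
  refine le_trans (natDegree_sub_le _ _) ?_
  simp only [max_le_iff, le_refl, and_true]
  exact le_trans (natDegree_smul_le _ _) (le_of_eq (natDegree_compShift Q _))

lemma polyStep_natDegree_eq (x : ℕ) (μ : ℂ) (Q : Polynomial ℂ) (h : μ ^ x ≠ 1) :
    (polyStep x μ Q).natDegree = Q.natDegree := by
  rcases eq_or_ne Q 0 with rfl | hQ
  · simp [polyStep]
  · refine le_antisymm (polyStep_natDegree_le x μ Q) (le_natDegree_of_ne_zero ?_)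
    rw [polyStep_coeff_top]
    exact mul_ne_zero (sub_ne_zero.mpr h) (leadingCoeff_ne_zero.mpr hQ)

lemma polyStep_eq_zero_imp (x : ℕ) (μ : ℂ) (Q : Polynomial ℂ) (h : μ ^ x ≠ 1)
    (h0 : polyStep x μ Q = 0) : Q = 0 := by
  by_contra hQ
  have := polyStep_coeff_top x μ Q
  rw [h0] at this
  simp only [coeff_zero] at this
  exact mul_ne_zero (sub_ne_zero.mpr h) (leadingCoeff_ne_zero.mpr hQ) this.symm

lemma foldr_polyStep_natDegree (μ : ℂ) (L : List ℕ) (hL : ∀ y ∈ L, μ ^ y ≠ 1)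
    (R : Polynomial ℂ) :
    (List.foldr (fun x Q => polyStep x μ Q) R L).natDegree = R.natDegree := by
  induction L with
  | nil => rfl
  | cons x L ih =>
      simp only [List.foldr_cons]
      rw [polyStep_natDegree_eq _ _ _ (hL x (by simp)),
        ih (fun y hy => hL y (List.mem_cons_of_mem _ hy))]

lemma chain_natDegree_zero (μ : ℂ) (L : List ℕ) (hpos : ∀ x ∈ L, 0 < x)
    (hcount : L.countP (fun x => decide (μ ^ x = 1)) ≤ 1) (R : Polynomial ℂ)
    (h0 : List.foldr (fun x Q => polyStep x μ Q) R L = 0) : R.natDegree = 0 := by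
  induction L generalizing R with
  | nil => simp only [List.foldr_nil] at h0; simp [h0]
  | cons x L ih =>
      simp only [List.foldr_cons] at h0
      set R' := List.foldr (fun x Q => polyStep x μ Q) R L with hR'
      by_cases hx1 : μ ^ x = 1
      · have hcomp : R'.comp (X + C (x:ℂ)) = R' := by
          have : polyStep x μ R' = R'.comp (X + C (x:ℂ)) - R' := by
            rw [polyStep, hx1, one_smul]
          rw [this] at h0
          exact sub_eq_zero.mp h0
        have hd : R'.natDegree = 0 :=
          natDegree_eq_zero_of_comp_shift_eq R' (x:ℂ)
            (Nat.cast_ne_zero.mpr (hpos x (by simp)).ne') hcomp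
        have hzero : ∀ y ∈ L, μ ^ y ≠ 1 := by
          rw [List.countP_cons] at hcount
          simp only [hx1, decide_true, if_true] at hcount
          have hc0 : L.countP (fun x => decide (μ ^ x = 1)) = 0 := by omega
          intro y hy hy1
          have := List.countP_eq_zero.mp hc0 y hy
          simp [hy1] at this
        rw [← foldr_polyStep_natDegree μ L hzero R, ← hR', hd]
      · have : R' = 0 := polyStep_eq_zero_imp x μ R' hx1 h0
        refine ih (fun y hy => hpos y (List.mem_cons_of_mem _ hy)) ?_ R (by rw [← hR']; exact this)
        rw [List.countP_cons] at hcount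
        omega

/-! ### Linear independence of exponential-polynomial functions -/

noncomputable def polyA (ν μ : ℂ) (Q : Polynomial ℂ) : Polynomial ℂ :=
  μ • Q.comp (X + C 1) - ν • Q

lemma polyA_coeff_top (ν μ : ℂ) (Q : Polynomial ℂ) :
    (polyA ν μ Q).coeff Q.natDegree = (μ - ν) * Q.leadingCoeff := by
  have h1 : (Q.comp (X + C (1:ℂ))).coeff Q.natDegree = Q.leadingCoeff := by
    rw [← natDegree_compShift Q (1:ℂ), coeff_natDegree, leadingCoeff_compShift]
  simp only [polyA, coeff_sub, coeff_smul, smul_eq_mul, h1, coeff_natDegree]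
  ring

lemma polyA_natDegree_le (ν μ : ℂ) (Q : Polynomial ℂ) :
    (polyA ν μ Q).natDegree ≤ Q.natDegree := by
  refine le_trans (natDegree_sub_le _ _) ?_
  simp only [max_le_iff]
  constructor
  · exact le_trans (natDegree_smul_le _ _) (le_of_eq (natDegree_compShift Q _))
  · exact natDegree_smul_le _ _

lemma polyA_ne_zero (ν μ : ℂ) (h : μ ≠ ν) (Q : Polynomial ℂ) (hQ : Q ≠ 0) :
    polyA ν μ Q ≠ 0 ∧ (polyA ν μ Q).natDegree = Q.natDegree := by
  have hc : (polyA ν μ Q).coeff Q.natDegree ≠ 0 := by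
    rw [polyA_coeff_top]
    exact mul_ne_zero (sub_ne_zero.mpr h) (leadingCoeff_ne_zero.mpr hQ)
  refine ⟨fun h0 => hc (by simp [h0]), le_antisymm (polyA_natDegree_le _ _ _)
    (le_natDegree_of_ne_zero hc)⟩

lemma polyA_diag_small (ν : ℂ) (Q : Polynomial ℂ) (hQ : Q ≠ 0) :
    polyA ν ν Q = 0 ∨ (polyA ν ν Q).natDegree < Q.natDegree := by
  rcases Nat.eq_zero_or_pos Q.natDegree with hd | hd
  · left
    obtain ⟨c, rfl⟩ := Polynomial.natDegree_eq_zero.mp hd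
    simp [polyA]
  · have hAeq : polyA ν ν Q = ν • (Q.comp (X + C 1) - Q) := by
      simp [polyA, smul_sub]
    rcases eq_or_ne (Q.comp (X + C 1) - Q) 0 with h0 | h0
    · left; rw [hAeq, h0, smul_zero]
    · right
      have hcompne : Q.comp (X + C 1) ≠ 0 := by
        intro h
        have h2 := natDegree_compShift Q (1:ℂ)
        rw [h] at h2
        simp only [natDegree_zero] at h2
        omega
      have hdegeq : (Q.comp (X + C 1)).degree = Q.degree := by
        rw [degree_eq_natDegree hcompne, degree_eq_natDegree hQ, natDegree_compShift]
      have hdeg : (Q.comp (X + C 1) - Q).degree < Q.degree := by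
        rw [← hdegeq]
        exact Polynomial.degree_sub_lt hdegeq hcompne (leadingCoeff_compShift Q 1)
      have : (Q.comp (X + C 1) - Q).natDegree < Q.natDegree :=
        Polynomial.natDegree_lt_natDegree h0 hdeg
      calc (polyA ν ν Q).natDegree ≤ (Q.comp (X + C 1) - Q).natDegree := by
            rw [hAeq]; exact natDegree_smul_le _ _
        _ < Q.natDegree := this

lemma li_aux (M : ℕ) : ∀ (S : Finset ℂ) (R : ℂ → Polynomial ℂ),
    (∑ μ ∈ S, (if R μ = 0 then 0 else (R μ).natDegree + 1)) = M →
    (∀ μ ∈ S, μ ≠ 0) →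
    (∀ t : ℕ, ∑ μ ∈ S, (R μ).eval (t : ℂ) * μ ^ t = 0) → ∀ μ ∈ S, R μ = 0 := by
  induction M using Nat.strong_induction_on with
  | _ M ih =>
    intro S R hM h0 hsum
    by_contra hcon
    push_neg at hcon
    obtain ⟨ν, hν, hνne⟩ := hcon
    set R2 : ℂ → Polynomial ℂ := fun μ => polyA ν μ (R μ) with hR2
    have hsum2 : ∀ t : ℕ, ∑ μ ∈ S, (R2 μ).eval (t : ℂ) * μ ^ t = 0 := by
      intro t
      have e1 := hsum (t + 1)
      have e2 := hsum t
      calc ∑ μ ∈ S, (R2 μ).eval (t : ℂ) * μ ^ t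
          = ∑ μ ∈ S, ((R μ).eval ((t+1 : ℕ) : ℂ) * μ ^ (t+1) - ν * ((R μ).eval (t : ℂ) * μ ^ t)) := by
            refine Finset.sum_congr rfl fun μ hμ => ?_
            simp only [hR2, polyA, eval_sub, eval_smul, eval_comp, eval_add, eval_X, eval_C,
              smul_eq_mul, pow_succ]
            push_cast
            ring
        _ = 0 := by rw [Finset.sum_sub_distrib, e1, ← Finset.mul_sum, e2, mul_zero, sub_zero]
    have hlt : (∑ μ ∈ S, (if R2 μ = 0 then 0 else (R2 μ).natDegree + 1)) < M := by
      rw [← hM]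
      refine Finset.sum_lt_sum (fun μ hμ => ?_) ⟨ν, hν, ?_⟩
      · rcases eq_or_ne (R μ) 0 with h | h
        · simp [hR2, h, polyA]
        · rcases eq_or_ne μ ν with rfl | hne
          · rw [if_neg h]
            rcases polyA_diag_small μ (R μ) h with h2 | h2
            · rw [if_pos (show R2 μ = 0 from h2)]
              omega
            · split_ifs with h4
              · omega
              · have : (R2 μ).natDegree < (R μ).natDegree := h2
                omega
          · obtain ⟨hne0, hdeg⟩ := polyA_ne_zero ν μ hne (R μ) h
            rw [if_neg h, if_neg (show R2 μ ≠ 0 from hne0),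
              show (R2 μ).natDegree = (R μ).natDegree from hdeg]
      · rw [if_neg hνne]
        rcases polyA_diag_small ν (R ν) hνne with h2 | h2
        · rw [if_pos (show R2 ν = 0 from h2)]
          omega
        · split_ifs with h4
          · omega
          · have : (R2 ν).natDegree < (R ν).natDegree := h2
            omega
    have hall2 : ∀ μ ∈ S, R2 μ = 0 := ih _ hlt S R2 rfl h0 hsum2
    have hoff : ∀ μ ∈ S, μ ≠ ν → R μ = 0 := by
      intro μ hμ hne
      by_contra h
      exact (polyA_ne_zero ν μ hne (R μ) h).1 (hall2 μ hμ)
    have hν0 : ∀ t : ℕ, (R ν).eval (t : ℂ) * ν ^ t = 0 := by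
      intro t
      have := hsum t
      rwa [Finset.sum_eq_single ν (fun μ hμ hne => by rw [hoff μ hμ hne]; simp)
        (fun h => absurd hν h)] at this
    have : R ν = 0 := by
      apply eval_nat_zero
      intro t
      have := hν0 t
      have hνne0 : (ν : ℂ) ^ t ≠ 0 := pow_ne_zero _ (h0 ν hν)
      exact (mul_eq_zero.mp this).resolve_right hνne0
    exact hνne this

/-! ### The counting function and its difference equation -/

noncomputable def qfun (n : ℕ) (a : Fin n → ℕ) (s : Finset (Fin n)) (t : ℕ) : ℕ :=
  Nat.card {m : Fin n → ℕ // (∑ i, m i * a i = t) ∧ ∀ i ∉ s, m i = 0}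

lemma qset_finite {n : ℕ} (a : Fin n → ℕ) (ha : ∀ i, 0 < a i) (s : Finset (Fin n)) (t : ℕ) :
    {m : Fin n → ℕ | (∑ i, m i * a i = t) ∧ ∀ i ∉ s, m i = 0}.Finite := by
  apply Set.Finite.subset (Set.Finite.pi (fun _ : Fin n => Set.finite_Iic t))
  rintro m ⟨hm, -⟩ j -
  have h1 : m j ≤ m j * a j := Nat.le_mul_of_pos_right _ (ha j)
  have h2 : m j * a j ≤ ∑ i, m i * a i :=
    Finset.single_le_sum (f := fun i => m i * a i) (fun i _ => Nat.zero_le _) (Finset.mem_univ j)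
  exact Set.mem_Iic.mpr (le_trans h1 (hm ▸ h2))

lemma qfun_eq_ncard {n : ℕ} (a : Fin n → ℕ) (s : Finset (Fin n)) (t : ℕ) :
    qfun n a s t = {m : Fin n → ℕ | (∑ i, m i * a i = t) ∧ ∀ i ∉ s, m i = 0}.ncard :=
  (Nat.card_coe_set_eq _).symm

lemma sum_update_mul {n : ℕ} (a : Fin n → ℕ) (m : Fin n → ℕ) (i : Fin n) (v : ℕ) :
    ∑ j, (Function.update m i v) j * a j = v * a i + ∑ j ∈ Finset.univ.erase i, m j * a j := by
  rw [← Finset.add_sum_erase _ _ (Finset.mem_univ i), Function.update_self]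
  congr 1
  refine Finset.sum_congr rfl fun j hj => ?_
  rw [Function.update_of_ne (Finset.ne_of_mem_erase hj)]

lemma qfun_key {n : ℕ} (a : Fin n → ℕ) (ha : ∀ i, 0 < a i) (s : Finset (Fin n)) (i : Fin n)
    (his : i ∈ s) (t : ℕ) :
    qfun n a s (t + a i) = qfun n a s t + qfun n a (s.erase i) (t + a i) := by
  classical
  set A := {m : Fin n → ℕ | (∑ j, m j * a j = t + a i) ∧ ∀ j ∉ s, m j = 0} with hA
  set B := {m : Fin n → ℕ | (∑ j, m j * a j = t) ∧ ∀ j ∉ s, m j = 0} with hB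
  set Cs := {m : Fin n → ℕ | (∑ j, m j * a j = t + a i) ∧ ∀ j ∉ s.erase i, m j = 0} with hCs
  set g : (Fin n → ℕ) → (Fin n → ℕ) := fun m => Function.update m i (m i + 1) with hg
  have hginj : Function.Injective g := by
    intro m m' hmm
    funext j
    rcases eq_or_ne j i with rfl | hj
    · have := congrFun hmm j
      simpa [hg] using this
    · have := congrFun hmm j
      simpa [hg, Function.update_of_ne hj] using this
  have hsplit : A = g '' B ∪ Cs := by
    ext m
    constructor
    · rintro ⟨hm, hz⟩
      rcases Nat.eq_zero_or_pos (m i) with h0 | h0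
      · right
        refine ⟨hm, fun j hj => ?_⟩
        rcases eq_or_ne j i with rfl | hne
        · exact h0
        · exact hz j (fun hjs => hj (Finset.mem_erase.mpr ⟨hne, hjs⟩))
      · left
        refine ⟨Function.update m i (m i - 1), ⟨?_, ?_⟩, ?_⟩
        · rw [sum_update_mul]
          have := (Finset.add_sum_erase _ (fun j => m j * a j) (Finset.mem_univ i)).symm
          rw [this] at hm
          have hmi : m i * a i = (m i - 1) * a i + a i := by
            conv_lhs => rw [show m i = (m i - 1) + 1 from (Nat.succ_pred_eq_of_pos h0).symm]
            rw [add_one_mul]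
          linarith
        · intro j hj
          rw [Function.update_of_ne (fun h : j = i => hj (h ▸ his))]
          exact hz j hj
        · funext j
          rcases eq_or_ne j i with rfl | hne
          · simp [hg, Function.update_self]
            omega
          · simp [hg, Function.update_of_ne hne]
    · rintro (⟨m', ⟨hm', hz'⟩, rfl⟩ | ⟨hm, hz⟩)
      · constructor
        · simp only [hg]
          rw [sum_update_mul]
          have := (Finset.add_sum_erase _ (fun j => m' j * a j) (Finset.mem_univ i)).symm
          rw [this] at hm'
          rw [add_one_mul]
          linarith
        · intro j hj
          simp only [hg]
          rw [Function.update_of_ne (fun h : j = i => hj (h ▸ his))]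
          exact hz' j hj
      · exact ⟨hm, fun j hj => hz j (fun hj2 => hj (Finset.mem_of_mem_erase hj2))⟩
  have hdisj : Disjoint (g '' B) Cs := by
    rw [Set.disjoint_left]
    rintro m ⟨m', -, rfl⟩ hm
    have h1 : g m' i = m' i + 1 := Function.update_self _ _ _
    have h2 : g m' i = 0 := hm.2 i (by simp)
    omega
  have hBfin := qset_finite a ha s t
  have hCfin := qset_finite a ha (s.erase i) (t + a i)
  rw [qfun_eq_ncard, qfun_eq_ncard, qfun_eq_ncard, ← hA, ← hB, ← hCs, hsplit,
    Set.ncard_union_eq hdisj (hBfin.image g) hCfin, Set.ncard_image_of_injective _ hginj]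

/-! ### Iterated differences -/

noncomputable def deltaFold (L : List ℕ) (f : ℕ → ℂ) : ℕ → ℂ :=
  L.foldr (fun x g => fun t => g (t + x) - g t) f

lemma deltaFold_cons (x : ℕ) (L : List ℕ) (f : ℕ → ℂ) :
    deltaFold (x :: L) f = fun t => deltaFold L f (t + x) - deltaFold L f t := rfl

lemma comb_fold {n : ℕ} (a : Fin n → ℕ) (ha : ∀ i, 0 < a i) :
    ∀ (l : List (Fin n)), l.Nodup → ∀ (s : Finset (Fin n)), (∀ i ∈ l, i ∈ s) →
    deltaFold (l.map a) (fun t => (qfun n a s t : ℂ)) =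
      fun t => (qfun n a (s \ l.toFinset) (t + (l.map a).sum) : ℂ) := by
  intro l
  induction l with
  | nil => intro _ s _; funext t; simp [deltaFold]
  | cons i l ih =>
      intro hnd s hsub
      have hndl : l.Nodup := (List.nodup_cons.mp hnd).2
      have hil : i ∉ l := (List.nodup_cons.mp hnd).1
      funext t
      rw [List.map_cons, deltaFold_cons,
        ih hndl s (fun j hj => hsub j (List.mem_cons_of_mem _ hj))]
      set s' := s \ l.toFinset with hs'
      have hi' : i ∈ s' := Finset.mem_sdiff.mpr ⟨hsub i (by simp), by
        simpa [List.mem_toFinset] using hil⟩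
      have hkey := congrArg (Nat.cast : ℕ → ℂ) (qfun_key a ha s' i hi' (t + (l.map a).sum))
      push_cast at hkey
      have harr : t + (l.map a).sum + a i = t + (a i :: (l.map a)).sum := by
        simp [List.sum_cons]; ring
      have hset : s'.erase i = s \ (i :: l).toFinset := by
        rw [List.toFinset_cons, hs']
        ext j
        simp only [Finset.mem_erase, Finset.mem_sdiff, Finset.mem_insert, List.mem_toFinset]
        tauto
      rw [← hset, ← harr]
      show (qfun n a s' (t + a i + (l.map a).sum) : ℂ) - qfun n a s' (t + (l.map a).sum) =
        (qfun n a (s'.erase i) (t + (l.map a).sum + a i) : ℂ)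
      have harr2 : t + a i + (l.map a).sum = t + (l.map a).sum + a i := by ring
      rw [harr2, hkey]
      ring

lemma exp_fold (S : Finset ℂ) (R : ℂ → Polynomial ℂ) :
    ∀ L : List ℕ,
      deltaFold L (fun t : ℕ => ∑ μ ∈ S, (R μ).eval (t : ℂ) * μ ^ t) =
        fun t : ℕ => ∑ μ ∈ S, ((L.foldr (fun x Q => polyStep x μ Q) (R μ)).eval (t : ℂ)) * μ ^ t := by
  intro L
  induction L with
  | nil => rfl
  | cons x L ih =>
      funext t
      rw [deltaFold_cons, ih]
      show (∑ μ ∈ S, ((L.foldr (fun x Q => polyStep x μ Q) (R μ)).eval ((t + x : ℕ) : ℂ)) * μ ^ (t + x))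
          - ∑ μ ∈ S, ((L.foldr (fun x Q => polyStep x μ Q) (R μ)).eval (t : ℂ)) * μ ^ t = _
      rw [← Finset.sum_sub_distrib]
      refine Finset.sum_congr rfl fun μ hμ => ?_
      simp only [List.foldr_cons, polyStep, eval_sub, eval_smul, eval_comp, eval_add, eval_X,
        eval_C, smul_eq_mul, pow_add]
      push_cast
      ring

lemma countP_le_one_of_nodup {α : Type*} (p : α → Bool) (l : List α) (hnd : l.Nodup)
    (h : ∀ x ∈ l, ∀ y ∈ l, p x → p y → x = y) : l.countP p ≤ 1 := by
  induction l with
  | nil => simp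
  | cons x l ih =>
      rw [List.countP_cons]
      have hndl : l.Nodup := (List.nodup_cons.mp hnd).2
      have hxl : x ∉ l := (List.nodup_cons.mp hnd).1
      by_cases hx : p x
      · have hc0 : l.countP p = 0 := by
          rw [List.countP_eq_zero]
          intro y hy hpy
          exact hxl ((h x (by simp) y (List.mem_cons_of_mem _ hy) hx hpy) ▸ hy)
        simp [hx, hc0]
      · have := ih hndl (fun u hu v hv hpu hpv =>
          h u (List.mem_cons_of_mem _ hu) v (List.mem_cons_of_mem _ hv) hpu hpv)
        simp [hx]
        omega

/-- If `a_1, ..., a_n` are pairwise coprime, then `Q_A(t) = p_A(t) - P_A(t)` is periodic with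
period `a_1 ⋯ a_n` and its average over one period is `0`. -/
theorem QA_periodic_average_zero (n : ℕ) (a : Fin n → ℕ) (ha : ∀ i, 0 < a i)
    (hcop : ∀ i j, i ≠ j → Nat.Coprime (a i) (a j))
    (P : ℂ → Polynomial ℂ)
    (hsupp : ∀ μ : ℂ, P μ ≠ 0 → ∃ i, μ ^ (a i) = 1)
    (hdecomp : ∀ t : ℕ, (restrictedPartition n a t : ℂ) =
      ∑ᶠ μ : ℂ, (P μ).eval (t : ℂ) * μ ^ t) :
    (∀ t : ℕ,
        (restrictedPartition n a (t + ∏ i, a i) : ℂ) - (P 1).eval ((t + ∏ i, a i : ℕ) : ℂ) =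
          (restrictedPartition n a t : ℂ) - (P 1).eval (t : ℂ)) ∧
      (∑ t ∈ Finset.range (∏ i, a i),
        ((restrictedPartition n a t : ℂ) - (P 1).eval (t : ℂ))) = 0 := by
  classical
  set N := ∏ i, a i with hN
  have hN0 : 0 < N := Finset.prod_pos (fun i _ => ha i)
  -- dispose of the degenerate case n = 0
  rcases Nat.eq_zero_or_pos n with rfl | hn
  · exfalso
    have hP0 : ∀ μ : ℂ, P μ = 0 := by
      intro μ
      by_contra h
      obtain ⟨i, _⟩ := hsupp μ h
      exact i.elim0
    have hrp1 : restrictedPartition 0 a 0 = 1 := by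
      rw [restrictedPartition]
      rw [Nat.card_eq_one_iff_unique]
      constructor
      · constructor
        intro x y
        apply Subtype.ext
        funext i
        exact i.elim0
      · exact ⟨⟨fun i => 0, by simp⟩⟩
    have h0 := hdecomp 0
    rw [hrp1] at h0
    simp only [hP0, eval_zero, zero_mul, finsum_zero, Nat.cast_one] at h0
    exact one_ne_zero h0
  -- the finite set of relevant roots of unity
  set S : Finset ℂ := (Polynomial.nthRoots N (1 : ℂ)).toFinset with hS
  have hmemS : ∀ μ : ℂ, μ ∈ S ↔ μ ^ N = 1 := by
    intro μ
    rw [hS, Multiset.mem_toFinset, Polynomial.mem_nthRoots hN0]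
  have h1S : (1 : ℂ) ∈ S := (hmemS 1).mpr (one_pow N)
  have hSne0 : ∀ μ ∈ S, μ ≠ 0 := by
    intro μ hμ h0
    rw [(hmemS μ), h0, zero_pow hN0.ne'] at hμ
    exact zero_ne_one hμ
  have hsubS : ∀ μ : ℂ, P μ ≠ 0 → μ ∈ S := by
    intro μ h
    obtain ⟨i, hi⟩ := hsupp μ h
    obtain ⟨k, hk⟩ := Finset.dvd_prod_of_mem a (Finset.mem_univ i)
    rw [hmemS, hN, hk, pow_mul, hi, one_pow]
  have hsum_fin : ∀ t : ℕ, (restrictedPartition n a t : ℂ) =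
      ∑ μ ∈ S, (P μ).eval (t : ℂ) * μ ^ t := by
    intro t
    rw [hdecomp t]
    apply finsum_eq_sum_of_support_subset
    intro μ hμ
    simp only [Function.mem_support] at hμ
    have : P μ ≠ 0 := by
      intro h
      rw [h] at hμ
      simp at hμ
    exact hsubS μ this
  -- relate to qfun
  have hrp_q : ∀ t, restrictedPartition n a t = qfun n a Finset.univ t := by
    intro t
    apply Nat.card_congr
    exact Equiv.subtypeEquivRight (by intro m; simp)
  set L : List ℕ := (List.finRange n).map a with hL
  have hLpos : ∀ x ∈ L, 0 < x := by
    intro x hx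
    rw [hL, List.mem_map] at hx
    obtain ⟨i, -, rfl⟩ := hx
    exact ha i
  have hLsum : 0 < L.sum := by
    rcases Nat.eq_zero_or_pos L.sum with h | h
    · exfalso
      have hmem : a ⟨0, hn⟩ ∈ L := by
        rw [hL, List.mem_map]
        exact ⟨⟨0, hn⟩, List.mem_finRange _, rfl⟩
      have := List.sum_eq_zero_iff.mp h
      exact (ha ⟨0, hn⟩).ne' (this _ hmem)
    · exact h
  -- the combinatorial iterated difference vanishes
  have hcomb : deltaFold L (fun t : ℕ => (qfun n a Finset.univ t : ℂ)) = fun _ => 0 := by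
    rw [hL, comb_fold a ha (List.finRange n) (List.nodup_finRange n) Finset.univ
      (fun i _ => Finset.mem_univ i)]
    funext t
    have hempty : Finset.univ \ (List.finRange n).toFinset = (∅ : Finset (Fin n)) := by
      rw [List.toFinset_finRange, Finset.sdiff_self]
    rw [hempty]
    have : qfun n a (∅ : Finset (Fin n)) (t + ((List.finRange n).map a).sum) = 0 := by
      rw [qfun]
      have : IsEmpty {m : Fin n → ℕ //
          (∑ i, m i * a i = t + ((List.finRange n).map a).sum) ∧
            ∀ i ∉ (∅ : Finset (Fin n)), m i = 0} := by
        constructor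
        rintro ⟨m, hm, hz⟩
        have hm0 : ∀ i, m i = 0 := fun i => hz i (Finset.notMem_empty i)
        have : ∑ i, m i * a i = 0 := by
          apply Finset.sum_eq_zero
          intro i _
          rw [hm0 i, zero_mul]
        rw [this] at hm
        have : 0 < ((List.finRange n).map a).sum := by rw [← hL]; exact hLsum
        omega
      exact Nat.card_of_isEmpty
    rw [this, Nat.cast_zero]
  -- the exponential side must vanish identically
  have hexp : ∀ t : ℕ, ∑ μ ∈ S,
      ((L.foldr (fun x Q => polyStep x μ Q) (P μ)).eval (t : ℂ)) * μ ^ t = 0 := by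
    intro t
    have hfun : (fun t : ℕ => (qfun n a Finset.univ t : ℂ)) =
        (fun t : ℕ => ∑ μ ∈ S, (P μ).eval (t : ℂ) * μ ^ t) := by
      funext u
      rw [← hrp_q u, hsum_fin u]
    have := congrFun (hfun ▸ hcomb : deltaFold L
      (fun t : ℕ => ∑ μ ∈ S, (P μ).eval (t : ℂ) * μ ^ t) = fun _ => 0) t
    rw [exp_fold S P L] at this
    exact this
  have hfoldzero : ∀ μ ∈ S, L.foldr (fun x Q => polyStep x μ Q) (P μ) = 0 :=
    li_aux _ S (fun μ => L.foldr (fun x Q => polyStep x μ Q) (P μ)) rfl hSne0 hexp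
  -- each P μ with μ ≠ 1 is constant
  have hconst : ∀ μ ∈ S, μ ≠ 1 → (P μ).natDegree = 0 := by
    intro μ hμ hμ1
    have hcount : L.countP (fun x => decide (μ ^ x = 1)) ≤ 1 := by
      rw [hL, List.countP_map]
      apply countP_le_one_of_nodup _ _ (List.nodup_finRange n)
      intro i _ j _ hpi hpj
      simp only [Function.comp_apply, decide_eq_true_eq] at hpi hpj
      by_contra hij
      have hco := hcop i j hij
      have h1Z : (1 : ℤ) = (a i : ℤ) * Nat.gcdA (a i) (a j) + (a j : ℤ) * Nat.gcdB (a i) (a j) := by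
        have := Nat.gcd_eq_gcd_ab (a i) (a j)
        rwa [Nat.Coprime.gcd_eq_one hco, Nat.cast_one] at this
      have hμ0 : μ ≠ 0 := hSne0 μ hμ
      have : μ = 1 := by
        have hz : μ ^ (1 : ℤ) = μ ^ ((a i : ℤ) * Nat.gcdA (a i) (a j)
            + (a j : ℤ) * Nat.gcdB (a i) (a j)) := by rw [← h1Z]
        rw [zpow_one, zpow_add₀ hμ0, zpow_mul, zpow_mul] at hz
        rw [hz]
        rw [show ((a i : ℤ)) = ((a i : ℕ) : ℤ) from rfl, zpow_natCast,
          show ((a j : ℤ)) = ((a j : ℕ) : ℤ) from rfl, zpow_natCast, hpi, hpj]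
        simp
      exact hμ1 this
    exact chain_natDegree_zero μ L hLpos hcount (P μ) (hfoldzero μ hμ)
  -- rewrite Q as a finite sum of pure exponentials
  have hQform : ∀ t : ℕ, (restrictedPartition n a t : ℂ) - (P 1).eval (t : ℂ) =
      ∑ μ ∈ S.erase 1, ((P μ).coeff 0) * μ ^ t := by
    intro t
    rw [hsum_fin t, ← Finset.add_sum_erase S _ h1S]
    have h1 : (P 1).eval (t : ℂ) * (1 : ℂ) ^ t = (P 1).eval (t : ℂ) := by
      rw [one_pow, mul_one]
    rw [h1]
    have : ∑ μ ∈ S.erase 1, (P μ).eval (t : ℂ) * μ ^ t =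
        ∑ μ ∈ S.erase 1, ((P μ).coeff 0) * μ ^ t := by
      refine Finset.sum_congr rfl fun μ hμ => ?_
      have hμS : μ ∈ S := Finset.mem_of_mem_erase hμ
      have hμ1 : μ ≠ 1 := (Finset.mem_erase.mp hμ).1
      have := eq_C_of_natDegree_eq_zero (hconst μ hμS hμ1)
      rw [this]
      simp
    rw [this]
    ring
  constructor
  · intro t
    rw [hQform t, hQform (t + N)]
    refine Finset.sum_congr rfl fun μ hμ => ?_
    have hμN : μ ^ N = 1 := (hmemS μ).mp (Finset.mem_of_mem_erase hμ)
    rw [pow_add, hμN, mul_one]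
  · have : ∑ t ∈ Finset.range N, ((restrictedPartition n a t : ℂ) - (P 1).eval (t : ℂ)) =
        ∑ t ∈ Finset.range N, ∑ μ ∈ S.erase 1, ((P μ).coeff 0) * μ ^ t := by
      refine Finset.sum_congr rfl fun t _ => hQform t
    rw [this, Finset.sum_comm]
    apply Finset.sum_eq_zero
    intro μ hμ
    have hμ1 : μ ≠ 1 := (Finset.mem_erase.mp hμ).1
    have hμN : μ ^ N = 1 := (hmemS μ).mp (Finset.mem_of_mem_erase hμ)
    rw [← Finset.mul_sum, geom_sum_eq hμ1, hμN, sub_self, zero_div, mul_zero]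
end

section
/- With c_l as in the partial fraction decomposition of G(z) = 1/((1-z^{a_1})⋯(1-z^{a_n})) at z = 1, the polynomial part satisfies P_A(t) = Σ_{l=1}^{n} c_l * binomial(t+l-1, l-1) = res( U(z) / (1-z)^{t+1} ), where U(z) = G(1-z). -/
/-!
Expand everything at `z = 1` in the local variable `w = 1 - z`, i.e. apply the ring map
`RatFunc ℚ → ℚ⸨X⸩` sending `X` to `1 - X`. It sends `G` to `U`, the principal part
`c_l / (1 - z)^l` to `c_l w^{-l}`, and the regular part `R` to a power series. Since
`(1 - w)^{-(t+1)} = ∑_k binom(t+k, t) w^k`, the residue of `U(w) (1 - w)^{-(t+1)}` receives nothing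
from `R` and `c_l binom(t+l-1, t)` from the `l`-th principal term, which is also the `t`-th
coefficient of `c_l (1 - z)^{-l}`.
-/

open PowerSeries

open scoped LaurentSeries Polynomial

namespace PowerSeries

variable {K : Type*} [Field K]

theorem coeff_inv_one_sub_X_pow_succ (d t : ℕ) :
    coeff t ((1 - X : K⟦X⟧) ^ (d + 1))⁻¹ = (d + t).choose d := by
  rw [(inv_eq_iff_mul_eq_one (by simp)).mpr (mk_add_choose_mul_one_sub_pow_eq_one K d), coeff_mk]

theorem coe_inv_of_constantCoeff_ne_zero {f : K⟦X⟧} (hf : constantCoeff f ≠ 0) :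
    (f : K⸨X⸩)⁻¹ = ((f⁻¹ : K⟦X⟧) : K⸨X⸩) :=
  inv_eq_of_mul_eq_one_right <| by rw [← coe_mul, PowerSeries.mul_inv_cancel f hf, coe_one]

theorem coeff_single_neg_mul_coe {R : Type*} [Semiring R] (l : ℕ) (r : R) (f : R⟦X⟧) :
    (HahnSeries.single (-(l + 1 : ℤ)) r * (f : R⸨X⸩)).coeff (-1) = r * coeff l f := by
  rw [show (-1 : ℤ) = l + -(l + 1 : ℤ) by ring, HahnSeries.coeff_single_mul_add,
    LaurentSeries.coeff_coe_powerSeries]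

end PowerSeries

namespace Polynomial

variable {K : Type*} [Field K]

/-- `p(1 - X)`: the Taylor expansion of `p` at `1` in the local variable `1 - X`. -/
noncomputable def expandAtOne : K[X] →+* K⟦X⟧ :=
  coeToPowerSeries.ringHom.comp (compRingHom (1 - X))

theorem expandAtOne_apply (p : K[X]) : expandAtOne p = (p.comp (1 - X) : K⟦X⟧) := rfl

theorem expandAtOne_injective : Function.Injective (expandAtOne (K := K)) := by
  intro p q h
  have h' := congrArg (·.comp (1 - X)) (coe_inj.mp h)
  simpa [comp_assoc] using h'

theorem constantCoeff_expandAtOne (p : K[X]) :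
    PowerSeries.constantCoeff (expandAtOne p) = p.eval 1 := by
  simp [expandAtOne_apply, coeff_zero_eq_eval_zero, eval_comp]

end Polynomial

namespace RatFunc

variable {K : Type*} [Field K]

noncomputable def laurentAtOne : RatFunc K →+* K⸨X⸩ :=
  liftRingHom ((HahnSeries.ofPowerSeries ℤ K).comp Polynomial.expandAtOne) <|
    nonZeroDivisors_le_comap_nonZeroDivisors_of_injective _ <|
      HahnSeries.ofPowerSeries_injective.comp Polynomial.expandAtOne_injective

theorem laurentAtOne_apply (f : RatFunc K) :
    laurentAtOne f =
      (Polynomial.expandAtOne f.num : K⸨X⸩) / (Polynomial.expandAtOne f.denom : K⸨X⸩) :=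
  liftRingHom_apply (L := K⸨X⸩) _ _ f

theorem laurentAtOne_algebraMap (p : K[X]) :
    laurentAtOne (algebraMap K[X] (RatFunc K) p) = (Polynomial.expandAtOne p : K⸨X⸩) := by
  simp [laurentAtOne]

theorem laurentAtOne_X : laurentAtOne (X : RatFunc K) = ((1 - PowerSeries.X : K⟦X⟧) : K⸨X⸩) := by
  rw [← algebraMap_X, laurentAtOne_algebraMap, Polynomial.expandAtOne_apply]
  simp

theorem laurentAtOne_C (c : K) : laurentAtOne (C c) = HahnSeries.C c := by
  rw [← algebraMap_C, laurentAtOne_algebraMap, Polynomial.expandAtOne_apply]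
  simp

theorem laurentAtOne_C_div_one_sub_X_pow (c : K) (l : ℕ) :
    laurentAtOne (C c / (1 - X) ^ l) = HahnSeries.single (-(l : ℤ)) c := by
  rw [map_div₀, map_pow, map_sub, map_one, laurentAtOne_X, laurentAtOne_C, coe_sub, coe_one,
    sub_sub_cancel, PowerSeries.coe_X, HahnSeries.single_pow, HahnSeries.C_apply, div_eq_mul_inv,
    HahnSeries.inv_single, HahnSeries.single_mul_single]
  simp

theorem exists_laurentAtOne_eq_coe {f : RatFunc K} (hf : f.denom.eval 1 ≠ 0) :
    ∃ g : K⟦X⟧, laurentAtOne f = g := by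
  refine ⟨Polynomial.expandAtOne f.num * (Polynomial.expandAtOne f.denom)⁻¹, ?_⟩
  rw [laurentAtOne_apply, div_eq_mul_inv, coe_mul, coe_inv_of_constantCoeff_ne_zero]
  rwa [Polynomial.constantCoeff_expandAtOne]

end RatFunc

theorem polynomialPart_eq_binomial_sum_eq_residue_general (n : ℕ) (a : Fin n → ℕ)
    (c : ℕ → ℚ) (R : RatFunc ℚ)
    (hG : (∏ i, (1 - RatFunc.X ^ (a i)) : RatFunc ℚ)⁻¹ =
      (∑ l ∈ Finset.Icc 1 n, RatFunc.C (c l) / (1 - RatFunc.X) ^ l) + R)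
    (hR : Polynomial.eval 1 R.denom ≠ 0)
    (t : ℕ) :
    PowerSeries.coeff t
        (∑ l ∈ Finset.Icc 1 n, PowerSeries.C (c l) * ((1 - PowerSeries.X) ^ l)⁻¹) =
      ∑ l ∈ Finset.Icc 1 n, c l * ((t + l - 1).choose (l - 1) : ℚ) ∧
    PowerSeries.coeff t
        (∑ l ∈ Finset.Icc 1 n, PowerSeries.C (c l) * ((1 - PowerSeries.X) ^ l)⁻¹) =
      (((∏ i, (1 - (1 - PowerSeries.X) ^ (a i)) : PowerSeries ℚ) : LaurentSeries ℚ)⁻¹ *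
        (((1 - PowerSeries.X : PowerSeries ℚ) ^ (t + 1) : PowerSeries ℚ) :
          LaurentSeries ℚ)⁻¹).coeff (-1) := by
  have hcoeff : ∀ l ∈ Finset.Icc 1 n, coeff t (C (c l) * ((1 - X : ℚ⟦X⟧) ^ l)⁻¹) =
      c l * ((t + l - 1).choose (l - 1) : ℚ) := by
    intro l hl
    obtain ⟨d, rfl⟩ := Nat.exists_eq_add_of_le' (Finset.mem_Icc.mp hl).1
    rw [coeff_C_mul, coeff_inv_one_sub_X_pow_succ, Nat.add_sub_cancel,
      show t + (d + 1) - 1 = d + t by omega]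
  have hU : ((∏ i, (1 - (1 - X) ^ a i) : ℚ⟦X⟧) : ℚ⸨X⸩) =
      RatFunc.laurentAtOne (∏ i, (1 - RatFunc.X ^ a i)) := by
    simp [map_prod, RatFunc.laurentAtOne_X]
  have hV : (((1 - X : ℚ⟦X⟧) ^ (t + 1) : ℚ⟦X⟧) : ℚ⸨X⸩)⁻¹ = (((1 - X) ^ (t + 1))⁻¹ : ℚ⟦X⟧) :=
    coe_inv_of_constantCoeff_ne_zero (by simp)
  have hregular : (RatFunc.laurentAtOne R * (((1 - X) ^ (t + 1))⁻¹ : ℚ⟦X⟧)).coeff (-1) = 0 := by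
    obtain ⟨g, hg⟩ := RatFunc.exists_laurentAtOne_eq_coe hR
    rw [hg, ← coe_mul, coeff_coe, if_pos (by norm_num)]
  rw [map_sum, Finset.sum_congr rfl hcoeff, hU, hV, ← map_inv₀, hG, map_add, add_mul,
    HahnSeries.coeff_add, hregular, add_zero, map_sum, Finset.sum_mul, HahnSeries.coeff_sum]
  refine ⟨rfl, Finset.sum_congr rfl fun l hl => ?_⟩
  obtain ⟨d, rfl⟩ := Nat.exists_eq_add_of_le' (Finset.mem_Icc.mp hl).1
  rw [RatFunc.laurentAtOne_C_div_one_sub_X_pow, Nat.cast_succ, coeff_single_neg_mul_coe,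
    coeff_inv_one_sub_X_pow_succ, Nat.add_sub_cancel, show t + (d + 1) - 1 = t + d by omega,
    Nat.choose_symm_add]

/-- With `c_l` as in the partial fraction decomposition of `G(z) = 1/∏(1 - z^{a_i})` at
`z = 1`, the polynomial part `P_A(t)` (defined by `∑_t P_A(t) z^t = ∑_l c_l/(1-z)^l`)
satisfies `P_A(t) = ∑_{l=1}^n c_l binom(t+l-1, l-1) = res(U(z)/(1-z)^{t+1})`,
where `U(z) = G(1-z)`. -/
theorem polynomialPart_eq_binomial_sum_eq_residue (n : ℕ) (a : Fin n → ℕ) (ha : ∀ i, 0 < a i)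
    (c : ℕ → ℚ) (R : RatFunc ℚ)
    (hG : (∏ i, (1 - RatFunc.X ^ (a i)) : RatFunc ℚ)⁻¹ =
      (∑ l ∈ Finset.Icc 1 n, RatFunc.C (c l) / (1 - RatFunc.X) ^ l) + R)
    (hR : Polynomial.eval 1 R.denom ≠ 0)
    (t : ℕ) :
    PowerSeries.coeff t
        (∑ l ∈ Finset.Icc 1 n, PowerSeries.C (c l) * ((1 - PowerSeries.X) ^ l)⁻¹) =
      ∑ l ∈ Finset.Icc 1 n, c l * ((t + l - 1).choose (l - 1) : ℚ) ∧
    PowerSeries.coeff t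
        (∑ l ∈ Finset.Icc 1 n, PowerSeries.C (c l) * ((1 - PowerSeries.X) ^ l)⁻¹) =
      (((∏ i, (1 - (1 - PowerSeries.X) ^ (a i)) : PowerSeries ℚ) : LaurentSeries ℚ)⁻¹ *
        (((1 - PowerSeries.X : PowerSeries ℚ) ^ (t + 1) : PowerSeries ℚ) :
          LaurentSeries ℚ)⁻¹).coeff (-1) :=
  polynomialPart_eq_binomial_sum_eq_residue_general n a c R hG hR t
end

section
/- Res_{z=1}(f(z)) = Res_{z=0}(e^z f(e^z)) for f(z) = 1/(z^{t+1}(1-z^{a_1})⋯(1-z^{a_n})); consequently P_A(t) = -Res_{z=0}( e^{-tz} / ((1-e^{a_1 z})⋯(1-e^{a_n z})) ). -/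
/-!
Residues are read off from small circle integrals (`HasResidueAt`). Let `ℓ` be holomorphic at `c`
with `ℓ c = 0` and `ℓ' c ≠ 0`, and let `G z = P z / z ^ (N + 1)` with `P` analytic at `0`. Then
`ℓ' · (G ∘ ℓ)` has residue at `c` the `N`-th Taylor coefficient of `P`: writing
`P z = P 0 + z · dslope P 0 z` lowers `N` by one, `ℓ' ℓ ^ m` has the primitive
`ℓ ^ (m + 1) / (m + 1)` for `m ≠ -1`, and `ℓ' / ℓ` differs from `1 / (w - c)` by a function
holomorphic at `c`. Taking `ℓ = id` and `ℓ = log` (with `c = 1`) gives both residues.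

For `G z = e^{-tz} / ∏ (1 - e^{a_i z})` the denominator is `z ^ n W z` with `W 0 = ∏ (-a_i) ≠ 0`,
and `P z = z e^{-tz} / W z` has a Taylor series `ψ` with `ψ · W = X · e^{-tX}` formally, so its
`n`-th coefficient is the coefficient of `X⁻¹` in the Laurent series of
`e^{-tX} / ∏ (1 - e^{a_i X})`.
-/

open scoped Real Topology
open Filter Metric Set Complex PowerSeries

theorem analyticAt_dslope {𝕜 E : Type*} [NontriviallyNormedField 𝕜] [NormedAddCommGroup E]
    [NormedSpace 𝕜 E] {f : 𝕜 → E} {a : 𝕜} (hf : AnalyticAt 𝕜 f a) :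
    AnalyticAt 𝕜 (dslope f a) a :=
  let ⟨_, hp⟩ := hf
  ⟨_, hp.has_fpower_series_dslope_fslope⟩

lemma eq_add_sub_mul_dslope {𝕜 : Type*} [NontriviallyNormedField 𝕜] (f : 𝕜 → 𝕜) (a b : 𝕜) :
    f b = f a + (b - a) * dslope f a b := by
  rw [← smul_eq_mul, sub_smul_dslope]
  ring

def HasResidueAt (f : ℂ → ℂ) (c ρ : ℂ) : Prop :=
  ∀ᶠ r in 𝓝[>] (0 : ℝ), CircleIntegrable f c r ∧ (∮ z in C(c, r), f z) = 2 * π * I * ρ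

lemma eventually_nhdsGT_forall_mem_sphere {p : ℂ → Prop} {c : ℂ} (h : ∀ᶠ w in 𝓝[≠] c, p w) :
    ∀ᶠ r in 𝓝[>] (0 : ℝ), ∀ w ∈ sphere c r, p w := by
  obtain ⟨ε, hε, hp⟩ := Metric.eventually_nhds_iff.mp (eventually_nhdsWithin_iff.mp h)
  filter_upwards [Ioo_mem_nhdsGT hε] with r hr w hw
  exact hp (by rw [mem_sphere.mp hw]; exact hr.2) (ne_of_mem_sphere hw hr.1.ne')

lemma eventually_nhdsGT_forall_mem_closedBall {p : ℂ → Prop} {c : ℂ} (h : ∀ᶠ w in 𝓝 c, p w) :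
    ∀ᶠ r in 𝓝[>] (0 : ℝ), ∀ w ∈ closedBall c r, p w := by
  obtain ⟨ε, hε, hp⟩ := Metric.eventually_nhds_iff_ball.mp h
  filter_upwards [Ioo_mem_nhdsGT hε] with r hr w hw
  exact hp w (closedBall_subset_ball hr.2 hw)

namespace HasResidueAt

variable {f g : ℂ → ℂ} {c ρ σ : ℂ}

lemma unique (hf : HasResidueAt f c ρ)
    (h : ∀ᶠ r in 𝓝[>] (0 : ℝ), (∮ z in C(c, r), f z) = 2 * π * I * σ) : ρ = σ := by
  obtain ⟨r, ⟨-, hρ⟩, hσ⟩ := (hf.and h).exists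
  exact mul_left_cancel₀ two_pi_I_ne_zero (hρ.symm.trans hσ)

lemma congr (hf : HasResidueAt f c ρ) (hfg : f =ᶠ[𝓝[≠] c] g) : HasResidueAt g c ρ := by
  filter_upwards [hf, eventually_nhdsGT_forall_mem_sphere hfg, self_mem_nhdsWithin]
    with r ⟨hint, hval⟩ heq (hr : 0 < r)
  refine ⟨(circleIntegrable_congr (by rwa [abs_of_pos hr])).mp hint, ?_⟩
  rw [← circleIntegral.integral_congr hr.le heq, hval]

lemma add (hf : HasResidueAt f c ρ) (hg : HasResidueAt g c σ) :
    HasResidueAt (fun z => f z + g z) c (ρ + σ) := by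
  filter_upwards [hf, hg] with r ⟨hfi, hfr⟩ ⟨hgi, hgr⟩
  exact ⟨hfi.add hgi, by rw [circleIntegral.integral_add hfi hgi, hfr, hgr]; ring⟩

lemma const_mul (a : ℂ) (hf : HasResidueAt f c ρ) :
    HasResidueAt (fun z => a * f z) c (a * ρ) := by
  filter_upwards [hf] with r ⟨hfi, hfr⟩
  exact ⟨hfi.const_smul, by rw [circleIntegral.integral_const_mul, hfr]; ring⟩

end HasResidueAt

lemma hasResidueAt_sub_inv (c : ℂ) : HasResidueAt (fun z => (z - c)⁻¹) c 1 := by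
  filter_upwards [self_mem_nhdsWithin] with r (hr : 0 < r)
  refine ⟨circleIntegrable_sub_inv_iff.mpr (Or.inr fun h => ?_), by simp [hr.ne']⟩
  simp at h
  exact hr.ne' ((abs_of_pos hr).symm.trans h.symm)

lemma AnalyticAt.hasResidueAt_zero {f : ℂ → ℂ} {c : ℂ} (hf : AnalyticAt ℂ f c) :
    HasResidueAt f c 0 := by
  filter_upwards [eventually_nhdsGT_forall_mem_closedBall hf.eventually_analyticAt,
    self_mem_nhdsWithin] with r hfr (hr : 0 < r)
  have hcont : ContinuousOn f (closedBall c r) := fun w hw =>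
    (hfr w hw).continuousAt.continuousWithinAt
  refine ⟨(hcont.mono sphere_subset_closedBall).circleIntegrable hr.le, ?_⟩
  rw [mul_zero]
  exact circleIntegral_eq_zero_of_differentiable_on_off_countable hr.le countable_empty hcont
    fun w hw => (hfr w (ball_subset_closedBall hw.1)).differentiableAt

lemma hasResidueAt_zero_of_hasDerivAt {F f : ℂ → ℂ} {c : ℂ}
    (h : ∀ᶠ w in 𝓝[≠] c, HasDerivAt F (f w) w ∧ ContinuousAt f w) : HasResidueAt f c 0 := by
  filter_upwards [eventually_nhdsGT_forall_mem_sphere h, self_mem_nhdsWithin]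
    with r hr (hr0 : 0 < r)
  refine ⟨ContinuousOn.circleIntegrable hr0.le fun w hw => (hr w hw).2.continuousWithinAt, ?_⟩
  rw [mul_zero]
  exact circleIntegral.integral_eq_zero_of_hasDerivWithinAt hr0.le fun w hw =>
    (hr w hw).1.hasDerivWithinAt

section ChangeOfVariables

variable {ℓ : ℂ → ℂ} {c : ℂ} (hℓ : AnalyticAt ℂ ℓ c) (hℓc : ℓ c = 0)
include hℓ hℓc

lemma hasResidueAt_deriv_mul_comp_of_analyticAt {g : ℂ → ℂ} (hg : AnalyticAt ℂ g 0) :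
    HasResidueAt (fun w => deriv ℓ w * g (ℓ w)) c 0 :=
  (hℓ.deriv.mul (hg.comp_of_eq hℓ hℓc)).hasResidueAt_zero

variable (hℓ' : deriv ℓ c ≠ 0)
include hℓ'

lemma eventually_ne_zero_of_deriv_ne_zero : ∀ᶠ w in 𝓝[≠] c, ℓ w ≠ 0 := by
  have hk : ContinuousAt (dslope ℓ c) c := continuousAt_dslope_same.mpr hℓ.differentiableAt
  filter_upwards [nhdsWithin_le_nhds (hk.eventually_ne (by rwa [dslope_same])),
    self_mem_nhdsWithin] with w hk hw
  rw [eq_add_sub_mul_dslope ℓ c w, hℓc, zero_add]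
  exact mul_ne_zero (sub_ne_zero.mpr hw) hk

lemma hasResidueAt_deriv_mul_zpow {m : ℤ} (hm : m ≠ -1) :
    HasResidueAt (fun w => deriv ℓ w * ℓ w ^ m) c 0 := by
  have hm1 : (m + 1 : ℂ) ≠ 0 := by exact_mod_cast (by omega : m + 1 ≠ 0)
  refine hasResidueAt_zero_of_hasDerivAt (F := fun w => ℓ w ^ (m + 1) / (m + 1)) ?_
  filter_upwards [nhdsWithin_le_nhds hℓ.eventually_analyticAt,
    eventually_ne_zero_of_deriv_ne_zero hℓ hℓc hℓ'] with w hw hne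
  refine ⟨(((hasDerivAt_zpow (m + 1) (ℓ w) (Or.inl hne)).comp w
    hw.differentiableAt.hasDerivAt).div_const (m + 1 : ℂ)).congr_deriv ?_,
    hw.deriv.continuousAt.mul ((continuousAt_zpow₀ _ _ (Or.inl hne)).comp hw.continuousAt)⟩
  rw [add_sub_cancel_right]
  push_cast
  field_simp

lemma hasResidueAt_deriv_mul_inv : HasResidueAt (fun w => deriv ℓ w * (ℓ w)⁻¹) c 1 := by
  set k := dslope ℓ c with hk_def
  set h := deriv ℓ - k with hh_def
  have hk : AnalyticAt ℂ k c := analyticAt_dslope hℓ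
  have hk0 : k c ≠ 0 := by rwa [hk_def, dslope_same]
  have hh0 : h c = 0 := by simp [hh_def, hk_def, dslope_same]
  have := (hasResidueAt_sub_inv c).add
    ((analyticAt_dslope (hℓ.deriv.sub hk)).mul (hk.inv hk0)).hasResidueAt_zero
  rw [add_zero] at this
  refine this.congr ?_
  filter_upwards [nhdsWithin_le_nhds (hk.continuousAt.eventually_ne hk0),
    self_mem_nhdsWithin] with w hkw (hw : w ≠ c)
  have hℓw : ℓ w = (w - c) * k w := by
    simpa [hℓc] using eq_add_sub_mul_dslope ℓ c w
  have hhw : h w = (w - c) * dslope h c w := by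
    simpa [hh0] using eq_add_sub_mul_dslope h c w
  have hderiv : deriv ℓ w = k w + (w - c) * dslope h c w := by
    rw [← hhw]; simp [h]
  have hwc : w - c ≠ 0 := sub_ne_zero.mpr hw
  -- `ℓ' / ℓ = 1 / (w - c) + dslope h c w / k w`, the second term being analytic at `c`
  simp only [Pi.mul_apply, Pi.inv_apply]
  rw [hderiv, hℓw]
  field_simp
  ring

lemma hasResidueAt_deriv_mul_pow_inv_mul {P : ℂ → ℂ} {p : FormalMultilinearSeries ℂ ℂ ℂ}
    (hP : HasFPowerSeriesAt P p 0) (N : ℕ) :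
    HasResidueAt (fun w => deriv ℓ w * ((ℓ w ^ (N + 1))⁻¹ * P (ℓ w))) c (p.coeff N) := by
  have hQ := hP.has_fpower_series_dslope_fslope
  cases N with
  | zero =>
    have := ((hasResidueAt_deriv_mul_inv hℓ hℓc hℓ').const_mul (P 0)).add
      (hasResidueAt_deriv_mul_comp_of_analyticAt hℓ hℓc ⟨_, hQ⟩)
    rw [add_zero, mul_one] at this
    rw [show p.coeff 0 = P 0 from hP.coeff_zero 1]
    refine this.congr ?_
    filter_upwards [eventually_ne_zero_of_deriv_ne_zero hℓ hℓc hℓ'] with w hw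
    rw [eq_add_sub_mul_dslope P 0 (ℓ w), sub_zero]
    field_simp
    ring
  | succ N =>
    have := ((hasResidueAt_deriv_mul_zpow hℓ hℓc hℓ' (m := -(N + 2 : ℕ)) (by omega)).const_mul
      (P 0)).add (hasResidueAt_deriv_mul_pow_inv_mul hQ N)
    rw [mul_zero, zero_add, p.coeff_fslope] at this
    refine this.congr ?_
    filter_upwards [eventually_ne_zero_of_deriv_ne_zero hℓ hℓc hℓ'] with w hw
    rw [eq_add_sub_mul_dslope P 0 (ℓ w), sub_zero, zpow_neg, zpow_natCast]
    field_simp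
    ring

theorem hasResidueAt_deriv_mul_comp {G P : ℂ → ℂ} {p : FormalMultilinearSeries ℂ ℂ ℂ} {N : ℕ}
    (hP : HasFPowerSeriesAt P p 0) (hG : ∀ᶠ z in 𝓝[≠] 0, G z = (z ^ (N + 1))⁻¹ * P z) :
    HasResidueAt (fun w => deriv ℓ w * G (ℓ w)) c (p.coeff N) := by
  have hℓ_tendsto : Tendsto ℓ (𝓝[≠] c) (𝓝[≠] 0) :=
    tendsto_nhdsWithin_of_tendsto_nhds_of_eventually_within ℓ
      (hℓc ▸ hℓ.continuousAt.tendsto.mono_left nhdsWithin_le_nhds)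
      (eventually_ne_zero_of_deriv_ne_zero hℓ hℓc hℓ')
  refine (hasResidueAt_deriv_mul_pow_inv_mul hℓ hℓc hℓ' hP N).congr ?_
  filter_upwards [hℓ_tendsto.eventually hG] with w hw
  rw [hw]

end ChangeOfVariables

theorem hasResidueAt_of_eventuallyEq_pow_inv_mul {G P : ℂ → ℂ}
    {p : FormalMultilinearSeries ℂ ℂ ℂ} {N : ℕ} (hP : HasFPowerSeriesAt P p 0)
    (hG : ∀ᶠ z in 𝓝[≠] 0, G z = (z ^ (N + 1))⁻¹ * P z) : HasResidueAt G 0 (p.coeff N) :=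
  (hasResidueAt_deriv_mul_comp analyticAt_id rfl (by simp) hP hG).congr
    (.of_forall fun _ => by simp)

section PowerSeriesAtZero

def HasPowerSeriesAtZero (f : ℂ → ℂ) (φ : PowerSeries ℂ) : Prop :=
  HasFPowerSeriesAt f (FormalMultilinearSeries.ofScalars ℂ (coeff · φ)) 0

variable {f g : ℂ → ℂ} {φ ψ : PowerSeries ℂ}

lemma hasPowerSeriesAtZero_iff :
    HasPowerSeriesAtZero f φ ↔ ∀ᶠ z in 𝓝 0, HasSum (fun k => coeff k φ * z ^ k) (f z) := by
  simp [HasPowerSeriesAtZero, hasFPowerSeriesAt_iff, FormalMultilinearSeries.coeff_ofScalars,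
    mul_comm]

lemma HasFPowerSeriesAt.hasPowerSeriesAtZero {p : FormalMultilinearSeries ℂ ℂ ℂ}
    (hp : HasFPowerSeriesAt f p 0) : HasPowerSeriesAtZero f (mk p.coeff) := by
  rw [hasFPowerSeriesAt_iff] at hp
  simpa [hasPowerSeriesAtZero_iff, mul_comm] using hp

lemma AnalyticAt.exists_hasPowerSeriesAtZero (hf : AnalyticAt ℂ f 0) :
    ∃ φ, HasPowerSeriesAtZero f φ :=
  let ⟨_, hp⟩ := hf
  ⟨_, hp.hasPowerSeriesAtZero⟩

namespace HasPowerSeriesAtZero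

lemma analyticAt (hf : HasPowerSeriesAtZero f φ) : AnalyticAt ℂ f 0 := ⟨_, hf⟩

lemma unique (hφ : HasPowerSeriesAtZero f φ) (hψ : HasPowerSeriesAtZero f ψ) : φ = ψ :=
  PowerSeries.ext fun k => congrFun
    (FormalMultilinearSeries.ofScalars_series_injective ℂ ℂ (hφ.eq_formalMultilinearSeries hψ)) k

lemma congr (hf : HasPowerSeriesAtZero f φ) (hfg : f =ᶠ[𝓝 0] g) : HasPowerSeriesAtZero g φ :=
  HasFPowerSeriesAt.congr hf hfg

lemma apply_zero (hf : HasPowerSeriesAtZero f φ) : f 0 = constantCoeff φ := by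
  simpa using (hf.coeff_zero 1).symm

lemma sub (hf : HasPowerSeriesAtZero f φ) (hg : HasPowerSeriesAtZero g ψ) :
    HasPowerSeriesAtZero (fun z => f z - g z) (φ - ψ) := by
  rw [hasPowerSeriesAtZero_iff] at hf hg ⊢
  filter_upwards [hf, hg] with z hfz hgz
  simpa [sub_mul] using hfz.sub hgz

lemma mul (hf : HasPowerSeriesAtZero f φ) (hg : HasPowerSeriesAtZero g ψ) :
    HasPowerSeriesAtZero (fun z => f z * g z) (φ * ψ) := by
  rw [hasPowerSeriesAtZero_iff] at hf hg ⊢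
  filter_upwards [hf, hg] with z hfz hgz
  have hf' : Summable fun k => ‖coeff k φ * z ^ k‖ := summable_norm_iff.mpr hfz.summable
  have hg' : Summable fun k => ‖coeff k ψ * z ^ k‖ := summable_norm_iff.mpr hgz.summable
  have := hasSum_sum_range_mul_of_summable_norm hf' hg'
  rw [hfz.tsum_eq, hgz.tsum_eq] at this
  refine this.congr_fun fun m => ?_
  rw [coeff_mul, Finset.Nat.sum_antidiagonal_eq_sum_range_succ_mk, Finset.sum_mul]
  refine Finset.sum_congr rfl fun k hk => ?_
  obtain ⟨j, rfl⟩ := Nat.exists_eq_add_of_le (Finset.mem_range_succ_iff.mp hk)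
  rw [Nat.add_sub_cancel_left, pow_add]
  ring

end HasPowerSeriesAtZero

lemma hasPowerSeriesAtZero_one : HasPowerSeriesAtZero (fun _ => 1) 1 := by
  rw [hasPowerSeriesAtZero_iff]
  filter_upwards with z
  convert hasSum_ite_eq 0 (1 : ℂ) using 2 with k
  rcases eq_or_ne k 0 with rfl | hk <;> simp [coeff_one, *]

lemma hasPowerSeriesAtZero_id : HasPowerSeriesAtZero (fun z => z) X := by
  rw [hasPowerSeriesAtZero_iff]
  filter_upwards with z
  convert hasSum_ite_eq 1 z using 2 with k
  rcases eq_or_ne k 1 with rfl | hk <;> simp [coeff_X, *]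

lemma hasPowerSeriesAtZero_finset_prod {ι : Type*} (s : Finset ι) {f : ι → ℂ → ℂ}
    {φ : ι → PowerSeries ℂ} (h : ∀ i ∈ s, HasPowerSeriesAtZero (f i) (φ i)) :
    HasPowerSeriesAtZero (fun z => ∏ i ∈ s, f i z) (∏ i ∈ s, φ i) := by
  classical
  induction s using Finset.induction_on with
  | empty => simpa using hasPowerSeriesAtZero_one
  | insert j s hj ih =>
    simp only [Finset.prod_insert hj]
    exact (h j (Finset.mem_insert_self j s)).mul (ih fun i hi => h i (Finset.mem_insert_of_mem hi))

lemma hasPowerSeriesAtZero_exp_mul (a : ℂ) :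
    HasPowerSeriesAtZero (fun z => Complex.exp (a * z)) (rescale a (exp ℂ)) := by
  rw [hasPowerSeriesAtZero_iff]
  filter_upwards with z
  rw [Complex.exp_eq_exp_ℂ]
  refine (NormedSpace.expSeries_div_hasSum_exp (a * z)).congr_fun fun k => ?_
  simp [coeff_rescale, coeff_exp, mul_pow, div_eq_mul_inv]
  ring

lemma HasPowerSeriesAtZero.X_mul (hf : HasPowerSeriesAtZero f (X * φ)) :
    HasPowerSeriesAtZero (dslope f 0) φ ∧ ∀ z, f z = z * dslope f 0 z := by
  refine ⟨?_, fun z => by simpa [hf.apply_zero] using eq_add_sub_mul_dslope f 0 z⟩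
  convert hf.has_fpower_series_dslope_fslope.hasPowerSeriesAtZero
  ext k
  simp [FormalMultilinearSeries.coeff_ofScalars, coeff_succ_X_mul]

lemma HasPowerSeriesAtZero.X_pow_mul {k : ℕ} (hf : HasPowerSeriesAtZero f (X ^ k * φ)) :
    ∃ g, HasPowerSeriesAtZero g φ ∧ ∀ z, f z = z ^ k * g z := by
  induction k generalizing f with
  | zero => exact ⟨f, by simpa using hf, by simp⟩
  | succ k ih =>
    rw [pow_succ', mul_assoc] at hf
    obtain ⟨hdf, hf_eq⟩ := hf.X_mul
    obtain ⟨g, hg, hdf_eq⟩ := ih hdf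
    exact ⟨g, hg, fun z => by rw [hf_eq, hdf_eq, pow_succ']; ring⟩

end PowerSeriesAtZero

section Laurent

lemma exists_prod_one_sub_rescale_exp_eq_X_pow_mul {ι : Type*} [Fintype ι] {a : ι → ℂ}
    (ha : ∀ i, a i ≠ 0) :
    ∃ U : PowerSeries ℂ, ∏ i, (1 - rescale (a i) (exp ℂ)) = X ^ Fintype.card ι * U ∧
      constantCoeff U ≠ 0 := by
  have hfactor : ∀ i, ∃ u, 1 - rescale (a i) (exp ℂ) = X * u ∧ constantCoeff u = -a i := by
    intro i
    have h0 : constantCoeff (1 - rescale (a i) (exp ℂ)) = 0 := by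
      rw [map_sub, map_one, ← coeff_zero_eq_constantCoeff_apply, coeff_rescale, coeff_exp]
      simp
    obtain ⟨u, hu⟩ := X_dvd_iff.mpr h0
    refine ⟨u, hu, ?_⟩
    have := congrArg (coeff 1) hu
    rw [coeff_succ_X_mul] at this
    simpa [coeff_one, coeff_rescale, coeff_exp] using this.symm
  choose u hu hu0 using hfactor
  refine ⟨∏ i, u i, ?_, ?_⟩
  · rw [Finset.prod_congr rfl fun i _ => hu i, Finset.prod_mul_distrib, Finset.prod_const,
      Finset.card_univ]
  · rw [map_prod]
    exact Finset.prod_ne_zero_iff.mpr fun i _ => by rw [hu0]; exact neg_ne_zero.mpr (ha i)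

lemma LaurentSeries.coeff_neg_one_coe_mul_inv_coe_X_pow_mul {ψ U E : PowerSeries ℂ} (k : ℕ)
    (hU : constantCoeff U ≠ 0) (h : ψ * U = X * E) :
    ((E : LaurentSeries ℂ) * ((X ^ k * U : PowerSeries ℂ) : LaurentSeries ℂ)⁻¹).coeff (-1) =
      coeff k ψ := by
  set s : LaurentSeries ℂ := HahnSeries.single 1 1 with hs_def
  have hs : s ≠ 0 := HahnSeries.single_ne_zero one_ne_zero
  have hU' : (U : LaurentSeries ℂ) ≠ 0 := fun h0 => hU <| by
    rw [(map_eq_zero_iff _ HahnSeries.ofPowerSeries_injective).mp h0, map_zero]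
  have h' : (ψ : LaurentSeries ℂ) * (U : LaurentSeries ℂ) = s * (E : LaurentSeries ℂ) := by
    rw [← coe_mul, h, coe_mul, coe_X]
  have hsingle : HahnSeries.single (-(k + 1 : ℤ)) (1 : ℂ) = (s ^ (k + 1))⁻¹ := by
    refine eq_inv_of_mul_eq_one_left ?_
    rw [HahnSeries.single_pow, HahnSeries.single_mul_single]
    simp
  have key : (E : LaurentSeries ℂ) * ((X ^ k * U : PowerSeries ℂ) : LaurentSeries ℂ)⁻¹ =
      HahnSeries.single (-(k + 1 : ℤ)) 1 * (ψ : LaurentSeries ℂ) := by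
    rw [coe_mul, coe_pow, coe_X, ← hs_def, hsingle]
    field_simp
    linear_combination (-s ^ k) * h'
  rw [key, show (-1 : ℤ) = k + -(k + 1 : ℤ) by ring, HahnSeries.coeff_single_mul_add, one_mul,
    LaurentSeries.coeff_coe_powerSeries]

end Laurent

section RestrictedPartition

variable {ι : Type*} [Fintype ι] (a : ι → ℕ) (t : ℕ)

lemma exp_mul_inv_exp_pow_succ_mul_prod (z : ℂ) :
    Complex.exp z * (Complex.exp z ^ (t + 1) * ∏ i, (1 - Complex.exp z ^ a i))⁻¹ =
      Complex.exp (-t * z) * (∏ i, (1 - Complex.exp (a i * z)))⁻¹ := by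
  simp_rw [← Complex.exp_nat_mul, mul_inv, ← mul_assoc, ← Complex.exp_neg, ← Complex.exp_add]
  push_cast
  ring_nf

lemma pow_mul_prod_inv_eventuallyEq_deriv_log_mul :
    (fun w : ℂ => (w ^ (t + 1) * ∏ i, (1 - w ^ a i))⁻¹) =ᶠ[𝓝[≠] 1] fun w =>
      deriv log w * (Complex.exp (log w) *
        (Complex.exp (log w) ^ (t + 1) * ∏ i, (1 - Complex.exp (log w) ^ a i))⁻¹) := by
  filter_upwards [nhdsWithin_le_nhds (isOpen_slitPlane.mem_nhds one_mem_slitPlane)] with w hw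
  rw [deriv_log hw, Complex.exp_log (slitPlane_ne_zero hw)]
  field_simp [slitPlane_ne_zero hw]

lemma exists_expansion_exp_div_prod_one_sub_exp (ha : ∀ i, 0 < a i) :
    ∃ (P : ℂ → ℂ) (ψ : PowerSeries ℂ), HasPowerSeriesAtZero P ψ ∧
      (∀ z ≠ 0, Complex.exp (-t * z) * (∏ i, (1 - Complex.exp (a i * z)))⁻¹ =
        (z ^ (Fintype.card ι + 1))⁻¹ * P z) ∧
      (((rescale (-(t : ℂ)) (exp ℂ) : PowerSeries ℂ) : LaurentSeries ℂ) *
        ((∏ i, (1 - rescale (a i : ℂ) (exp ℂ)) : PowerSeries ℂ) : LaurentSeries ℂ)⁻¹).coeff (-1) =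
        coeff (Fintype.card ι) ψ := by
  obtain ⟨U, hDU, hU0⟩ := exists_prod_one_sub_rescale_exp_eq_X_pow_mul
    (a := fun i => (a i : ℂ)) fun i => Nat.cast_ne_zero.mpr (ha i).ne'
  have hD : HasPowerSeriesAtZero (fun z => ∏ i, (1 - Complex.exp (a i * z)))
      (X ^ Fintype.card ι * U) := hDU ▸ hasPowerSeriesAtZero_finset_prod _
        fun i _ => hasPowerSeriesAtZero_one.sub (hasPowerSeriesAtZero_exp_mul _)
  obtain ⟨W, hW, hDW⟩ := hD.X_pow_mul
  have hW0 : W 0 ≠ 0 := hW.apply_zero ▸ hU0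
  have hE := hasPowerSeriesAtZero_id.mul (hasPowerSeriesAtZero_exp_mul (-t))
  obtain ⟨ψ, hψ⟩ := (hE.analyticAt.mul (hW.analyticAt.inv hW0)).exists_hasPowerSeriesAtZero
  have hψU : ψ * U = X * rescale (-(t : ℂ)) (exp ℂ) := by
    refine ((hψ.mul hW).congr ?_).unique hE
    filter_upwards [hW.analyticAt.continuousAt.eventually_ne hW0] with z hz
    simp only [Pi.mul_apply, Pi.inv_apply]
    field_simp
  refine ⟨_, ψ, hψ, fun z hz => ?_, ?_⟩
  · rw [hDW]
    simp only [Pi.mul_apply, Pi.inv_apply]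
    field_simp
    ring
  · rw [hDU]
    exact LaurentSeries.coeff_neg_one_coe_mul_inv_coe_X_pow_mul _ hU0 hψU

end RestrictedPartition

/-- For `f(z) = 1/(z^{t+1}(1-z^{a_1})⋯(1-z^{a_n}))` we have
`Res_{z=1} f(z) = Res_{z=0} e^z f(e^z)`; consequently the polynomial part
`P_A(t) = -Res_{z=1} f` equals `-Res_{z=0} e^{-tz}/((1-e^{a_1 z})⋯(1-e^{a_n z}))`,
the latter residue being the coefficient of `z^{-1}` in the formal Laurent expansion.
Residues at a point `c` are characterized by `∮_{|z-c|=r} = 2πi Res` for all small `r > 0`. -/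
theorem residue_change_of_variables_exp (n : ℕ) (a : Fin n → ℕ) (ha : ∀ i, 0 < a i) (t : ℕ)
    (Res1 Res0 : ℂ)
    (hRes1 : ∀ᶠ r in nhdsWithin 0 (Set.Ioi (0 : ℝ)),
      (∮ z in C(1, r), (z ^ (t + 1) * ∏ i, (1 - z ^ (a i)))⁻¹) =
        (2 * π * Complex.I) * Res1)
    (hRes0 : ∀ᶠ r in nhdsWithin 0 (Set.Ioi (0 : ℝ)),
      (∮ z in C(0, r),
          Complex.exp z *
            ((Complex.exp z) ^ (t + 1) * ∏ i, (1 - (Complex.exp z) ^ (a i)))⁻¹) =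
        (2 * π * Complex.I) * Res0) :
    Res1 = Res0 ∧
      -Res1 =
        -(((PowerSeries.rescale (-(t : ℂ)) (PowerSeries.exp ℂ) : PowerSeries ℂ) :
              LaurentSeries ℂ) *
            ((∏ i, (1 - PowerSeries.rescale ((a i : ℂ)) (PowerSeries.exp ℂ)) :
              PowerSeries ℂ) : LaurentSeries ℂ)⁻¹).coeff (-1) := by
  obtain ⟨P, ψ, hψ, hP, hcoeff⟩ := exists_expansion_exp_div_prod_one_sub_exp a t ha
  rw [Fintype.card_fin] at hP hcoeff
  have hG : ∀ᶠ z in 𝓝[≠] 0, Complex.exp z *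
      (Complex.exp z ^ (t + 1) * ∏ i, (1 - Complex.exp z ^ a i))⁻¹ = (z ^ (n + 1))⁻¹ * P z := by
    filter_upwards [self_mem_nhdsWithin] with z hz
    rw [exp_mul_inv_exp_pow_succ_mul_prod, hP z hz]
  have hRes0' := hasResidueAt_of_eventuallyEq_pow_inv_mul hψ hG
  have hRes1' := (hasResidueAt_deriv_mul_comp (analyticAt_clog one_mem_slitPlane) log_one
    (by simp [deriv_log]) hψ hG).congr (pow_mul_prod_inv_eventuallyEq_deriv_log_mul a t).symm
  rw [FormalMultilinearSeries.coeff_ofScalars] at hRes0' hRes1'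
  rw [← hRes1'.unique hRes1, ← hRes0'.unique hRes0, hcoeff]
  exact ⟨rfl, rfl⟩
end
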